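/- arXiv:2306.16155 — 8 statements merged into one kernel-verified Lean document; each statement's English description precedes it below -/
import Mathlib

section
/- Let K be a perfect field of characteristic coprime to 2m, let a ∈ K*, and let K(α) = K[X]/(X^m + a) be a field extension of K of degree m. For any unit u ∈ K(α)*, the trace form Tr_{K(α)/K}(⟨u⟩) in the Grothendieck–Witt ring GW(K) equals ((m-1)/2)·H + ⟨um⟩ if m is odd, and ((m-2)/2)·H + ⟨um⟩ + ⟨-aum⟩ if m is even, where H = ⟨1⟩ + ⟨-1⟩ is the hyperbolic form. -/
/-!
Let `α` be the class of `X`, so `α ^ m = -a`. In the power basis `1, α, …, α^(m-1)` one finds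
`Tr(α^n) = 0` for `0 < n < 2m`, `n ≠ m`, while `Tr 1 = m` and `Tr(α^m) = -a m`. So for the form
`u · Tr(xy)` the line `K · 1` has value `u m`; for `0 < 2k < m` the plane spanned by `α^k` and
`α^(m-k)` is hyperbolic, with `α^k`, `α^(m-k)` isotropic and paired to `c := -a u m`, and
`α^k ± (2c)⁻¹ α^(m-k)` split it as `⟨1⟩ ⊥ ⟨-1⟩`; for even `m`, `α^(m/2)` has value `c`. These
`m` vectors are pairwise orthogonal with the prescribed nonzero values, hence form a diagonalising
basis.
-/

open Polynomial

namespace AdjoinRoot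

variable {R : Type*} [CommRing R] {m : ℕ} (a : R)

local notation "α" => root (X ^ m + C a)

theorem root_X_pow_add_C_pow : α ^ m = algebraMap R (AdjoinRoot (X ^ m + C a)) (-a) := by
  have h := eval₂_root (X ^ m + C a)
  rw [eval₂_add, eval₂_pow, eval₂_X, eval₂_C] at h
  rw [algebraMap_eq, map_neg]
  exact eq_neg_of_add_eq_zero_left h

variable [Nontrivial R]

theorem powerBasis'_repr_root_pow (hm : m ≠ 0) {n : ℕ} (hn : n < 2 * m)
    (j : Fin (powerBasis' (monic_X_pow_add_C a hm)).dim) :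
    (powerBasis' (monic_X_pow_add_C a hm)).basis.repr (α ^ n) j =
      if n = j then 1 else if n = m + j then -a else 0 := by
  have hbasis (k : ℕ) (hk : k < m) :
      α ^ k = (powerBasis' (monic_X_pow_add_C a hm)).basis ⟨k, by simpa using hk⟩ := by
    rw [PowerBasis.basis_eq_pow, powerBasis'_gen]
  have hj : (j : ℕ) < m := by simpa using j.2
  rcases lt_or_ge n m with hnm | hnm
  · rw [hbasis n hnm, Module.Basis.repr_self, Finsupp.single_apply]
    simp only [Fin.ext_iff]
    split_ifs <;> first | rfl | omega
  · obtain ⟨k, rfl⟩ := Nat.exists_eq_add_of_le hnm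
    rw [pow_add, root_X_pow_add_C_pow, ← Algebra.smul_def, map_smul, hbasis k (by omega),
      Module.Basis.repr_self, Finsupp.smul_apply, Finsupp.single_apply]
    simp only [Fin.ext_iff]
    split_ifs <;> first | omega | simp

theorem trace_root_pow_of_le (hm : m ≠ 0) {n : ℕ} (hn : n ≤ m) :
    Algebra.trace R (AdjoinRoot (X ^ m + C a)) (α ^ n) =
      if n = 0 then (m : R) else if n = m then -a * m else 0 := by
  rw [Algebra.trace_eq_matrix_trace (powerBasis' (monic_X_pow_add_C a hm)).basis, Matrix.trace]
  simp only [Matrix.diag_apply, Algebra.leftMulMatrix_eq_repr_mul, PowerBasis.basis_eq_pow,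
    powerBasis'_gen, ← pow_add]
  rw [Finset.sum_congr rfl fun j _ =>
    powerBasis'_repr_root_pow a hm (by have := j.2; simp at this; omega) j]
  simp only [add_eq_right, add_left_inj, Finset.sum_const, Finset.card_univ, Fintype.card_fin,
    powerBasis'_dim, natDegree_X_pow_add_C, nsmul_eq_mul]
  split_ifs <;> ring

theorem trace_root_pow_of_lt_two_mul {n : ℕ} (hn : n < 2 * m) :
    Algebra.trace R (AdjoinRoot (X ^ m + C a)) (α ^ n) =
      if n = 0 then (m : R) else if n = m then -a * m else 0 := by
  have hm : m ≠ 0 := by omega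
  rcases le_or_gt n m with hnm | hnm
  · exact trace_root_pow_of_le a hm hnm
  · obtain ⟨k, rfl⟩ := Nat.exists_eq_add_of_le hnm.le
    rw [pow_add, root_X_pow_add_C_pow, ← Algebra.smul_def, map_smul,
      trace_root_pow_of_le a hm (by omega)]
    simp only [show k ≠ 0 by omega, show k ≠ m by omega, show m + k ≠ 0 by omega,
      show m + k ≠ m by omega, if_false, smul_zero]

theorem traceForm_root_pow_root_pow {s t : ℕ} (hs : s < m) (ht : t < m) :
    Algebra.traceForm R (AdjoinRoot (X ^ m + C a)) (α ^ s) (α ^ t) =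
      if s + t = 0 then (m : R) else if s + t = m then -a * m else 0 := by
  rw [Algebra.traceForm_apply, ← pow_add, trace_root_pow_of_lt_two_mul a (by omega)]

theorem traceForm_root_pow_add_smul_root_pow_sub {k l : ℕ} (hk : 0 < k)
    (hkm : 2 * k < m) (hl : 0 < l) (hlm : 2 * l < m) (d d' : R) :
    Algebra.traceForm R (AdjoinRoot (X ^ m + C a)) (α ^ k + d • α ^ (m - k))
      (α ^ l + d' • α ^ (m - l)) = if k = l then (d + d') * (-a * m) else 0 := by
  simp only [map_add, map_smul, LinearMap.add_apply, LinearMap.smul_apply, smul_eq_mul]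
  simp (disch := omega) only [traceForm_root_pow_root_pow a]
  split_ifs <;> first | omega | ring

theorem traceForm_root_pow_add_smul_root_pow_sub_root_pow {k s : ℕ} (hk : 0 < k)
    (hkm : k < m) (hs : s < m) (hsk : s ≠ k) (hsk' : s + k ≠ m) (d : R) :
    Algebra.traceForm R (AdjoinRoot (X ^ m + C a)) (α ^ k + d • α ^ (m - k)) (α ^ s) = 0 := by
  simp only [map_add, map_smul, LinearMap.add_apply, LinearMap.smul_apply, smul_eq_mul]
  simp (disch := omega) only [traceForm_root_pow_root_pow a]
  split_ifs <;> first | omega | ring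

end AdjoinRoot

theorem LinearMap.BilinForm.toQuadraticMap_equivalent_weightedSumSquares
    {K V ι : Type*} [Field K] [AddCommGroup V] [Module K V] [FiniteDimensional K V] [Fintype ι]
    {B : LinearMap.BilinForm K V} {v : ι → V} (hv : B.IsOrthoᵢ v)
    (hv₀ : ∀ i, B (v i) (v i) ≠ 0) (hcard : Fintype.card ι = Module.finrank K V) :
    B.toQuadraticMap.Equivalent (QuadraticMap.weightedSumSquares K fun i => B (v i) (v i)) := by
  classical
  let b := basisOfLinearIndependentOfCardEqFinrank' v
    (LinearMap.linearIndependent_of_isOrthoᵢ hv hv₀) hcard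
  have hb : ⇑b = v := by simp [b, basisOfLinearIndependentOfCardEqFinrank']
  have hrepr : B.toQuadraticMap.basisRepr b =
      QuadraticMap.weightedSumSquares K fun i => B (v i) (v i) := by
    ext c
    simp only [QuadraticMap.basisRepr_apply, LinearMap.BilinMap.toQuadraticMap_apply, hb,
      map_sum, map_smul, LinearMap.sum_apply, LinearMap.smul_apply, smul_eq_mul,
      QuadraticMap.weightedSumSquares_apply]
    refine Finset.sum_congr rfl fun i _ => ?_
    rw [Finset.sum_eq_single i (fun j _ hji => by rw [hv hji, mul_zero]) (by simp)]
    ring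
  exact hrepr ▸ ⟨B.toQuadraticMap.isometryEquivBasisRepr b⟩

section TraceForm

open AdjoinRoot

variable {K : Type*} [Field K] {m : ℕ} (a u : K)

local notation "L" => AdjoinRoot (X ^ m + C a : K[X])
local notation "α" => root (X ^ m + C a : K[X])

def traceFormWeights (i : Fin m) : K :=
  if (i : ℕ) < 2 * ((m - 1) / 2) then (if (i : ℕ) % 2 = 0 then 1 else -1)
  else if (i : ℕ) = 2 * ((m - 1) / 2) then u * m else -a * u * m

/-- Indices `2k - 2` and `2k - 1` carry the hyperbolic pair at `α^k`; the index `2 ((m-1)/2)`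
carries `1`, and for even `m` the last index carries `α^(m/2)`. -/
noncomputable def traceFormOrthoBasis (i : Fin m) : L :=
  if (i : ℕ) < 2 * ((m - 1) / 2) then
    α ^ ((i : ℕ) / 2 + 1) +
      (traceFormWeights a u i / (2 * (-a * u * m))) • α ^ (m - ((i : ℕ) / 2 + 1))
  else α ^ (if (i : ℕ) = 2 * ((m - 1) / 2) then 0 else m / 2)

variable {a u}

theorem traceFormWeights_ne_zero (ha : a ≠ 0) (hu : u ≠ 0) (hm : (m : K) ≠ 0) (i : Fin m) :
    traceFormWeights a u i ≠ 0 := by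
  unfold traceFormWeights
  split_ifs <;> simp [ha, hu, hm]

theorem eq_traceFormWeights {w : Fin m → K}
    (hw : (Odd m → w = fun i : Fin m => if (i : ℕ) < m - 1 then
            (if (i : ℕ) % 2 = 0 then 1 else -1) else u * m) ∧
          (Even m → w = fun i : Fin m => if (i : ℕ) < m - 2 then
            (if (i : ℕ) % 2 = 0 then 1 else -1)
          else if (i : ℕ) = m - 2 then u * m else -a * u * m)) :
    w = traceFormWeights a u := by
  funext i
  have hi := i.2
  unfold traceFormWeights
  rcases Nat.even_or_odd m with hm | hm
  · rw [hw.2 hm]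
    dsimp only
    have := Nat.even_iff.mp hm
    split_ifs <;> first | rfl | omega
  · rw [hw.1 hm]
    dsimp only
    have := Nat.odd_iff.mp hm
    split_ifs <;> first | rfl | omega

theorem smul_traceForm_traceFormOrthoBasis_self (ha : a ≠ 0) (hu : u ≠ 0) (hm : (2 * m : K) ≠ 0)
    (i : Fin m) :
    (u • Algebra.traceForm K L) (traceFormOrthoBasis a u i) (traceFormOrthoBasis a u i) =
      traceFormWeights a u i := by
  have hi := i.2
  simp only [LinearMap.smul_apply, smul_eq_mul]
  unfold traceFormOrthoBasis
  split_ifs with hpair hunit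
  · rw [traceForm_root_pow_add_smul_root_pow_sub a (by omega) (by omega) (by omega)
      (by omega), if_pos rfl]
    have := left_ne_zero_of_mul hm
    have := right_ne_zero_of_mul hm
    field_simp
    ring
  all_goals
    rw [traceForm_root_pow_root_pow a (by omega) (by omega)]
    simp only [traceFormWeights, hpair, hunit, if_false]
    split_ifs <;> first | omega | ring

theorem smul_traceForm_isOrthoᵢ_traceFormOrthoBasis :
    (u • Algebra.traceForm K L).IsOrthoᵢ (traceFormOrthoBasis a u) := by
  intro i j hij
  have hij' : (i : ℕ) ≠ j := Fin.val_ne_of_ne hij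
  have hi := i.2
  have hj := j.2
  dsimp only [Function.onFun]
  simp only [LinearMap.smul_apply, smul_eq_mul, mul_eq_zero]
  right
  unfold traceFormOrthoBasis
  by_cases hpi : (i : ℕ) < 2 * ((m - 1) / 2) <;> by_cases hpj : (j : ℕ) < 2 * ((m - 1) / 2) <;>
    simp only [hpi, hpj, ↓reduceIte]
  · rw [traceForm_root_pow_add_smul_root_pow_sub a (by omega) (by omega) (by omega)
      (by omega)]
    split_ifs with hk
    · have hsign : traceFormWeights a u i + traceFormWeights a u j = 0 := by
        simp only [traceFormWeights, hpi, hpj, if_true]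
        split_ifs <;> first | omega | ring
      rw [← add_div, hsign, zero_div, zero_mul]
    · rfl
  · exact traceForm_root_pow_add_smul_root_pow_sub_root_pow a (by omega) (by omega)
      (by split_ifs <;> omega) (by split_ifs <;> omega) (by split_ifs <;> omega) _
  · rw [(Algebra.traceForm_isSymm K (S := L)).eq]
    exact traceForm_root_pow_add_smul_root_pow_sub_root_pow a (by omega) (by omega)
      (by split_ifs <;> omega) (by split_ifs <;> omega) (by split_ifs <;> omega) _
  · rw [traceForm_root_pow_root_pow a (by split_ifs <;> omega) (by split_ifs <;> omega)]
    split_ifs <;> first | omega | rfl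

end TraceForm

/-- The hyperbolic summands `H = ⟨1⟩ + ⟨-1⟩` appear as consecutive diagonal entries `1, -1` of
the weighted sum of squares. -/
theorem trace_form_adjoin_mth_root_general
    {K : Type*} [Field K] (m : ℕ) (hchar : ((2 * m : ℕ) : K) ≠ 0)
    (a : K) (ha : a ≠ 0)
    (u : K) (hu : u ≠ 0)
    (w : Fin m → K)
    (hw : (Odd m → w = fun i : Fin m => if (i : ℕ) < m - 1 then
            (if (i : ℕ) % 2 = 0 then 1 else -1) else u * m) ∧
          (Even m → w = fun i : Fin m => if (i : ℕ) < m - 2 then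
            (if (i : ℕ) % 2 = 0 then 1 else -1)
          else if (i : ℕ) = m - 2 then u * m else -a * u * m)) :
    QuadraticMap.Equivalent
      (((u • Algebra.traceForm K (AdjoinRoot (X ^ m + C a : K[X]))) :
        LinearMap.BilinMap K (AdjoinRoot (X ^ m + C a : K[X])) K).toQuadraticMap)
      (QuadraticMap.weightedSumSquares K w) := by
  have hm : (2 * m : K) ≠ 0 := by exact_mod_cast hchar
  have hm₀ : m ≠ 0 := by rintro rfl; simp at hm
  have := (monic_X_pow_add_C a hm₀).finite_adjoinRoot
  have hcard : Fintype.card (Fin m) = Module.finrank K (AdjoinRoot (X ^ m + C a)) := by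
    simp [(AdjoinRoot.powerBasis' (monic_X_pow_add_C a hm₀)).finrank]
  have hdiag := smul_traceForm_traceFormOrthoBasis_self ha hu hm
  have hw₀ (i : Fin m) : traceFormWeights a u i ≠ 0 :=
    traceFormWeights_ne_zero ha hu (right_ne_zero_of_mul hm) i
  have hequiv := LinearMap.BilinForm.toQuadraticMap_equivalent_weightedSumSquares
    smul_traceForm_isOrthoᵢ_traceFormOrthoBasis (fun i => hdiag i ▸ hw₀ i) hcard
  rwa [funext hdiag, ← eq_traceFormWeights hw] at hequiv

/-- Trace form of the field extension `K(α) = K[X]/(X^m + a)`: for a unit `u ∈ K`, the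
`K`-quadratic form `x ↦ Tr_{K(α)/K}(u·x²)` is equivalent to `((m-1)/2)·H + ⟨um⟩` when `m`
is odd, and to `((m-2)/2)·H + ⟨um⟩ + ⟨-aum⟩` when `m` is even, where `H = ⟨1⟩ + ⟨-1⟩`.
The hyperbolic summands are encoded as alternating diagonal entries `1, -1, …` of a
weighted sum of squares. -/
theorem trace_form_adjoin_mth_root
    {K : Type*} [Field K] (m : ℕ) (hm : 1 ≤ m) (hchar : ((2 * m : ℕ) : K) ≠ 0)
    (a : K) (ha : a ≠ 0) (hirr : Irreducible (X ^ m + C a : K[X]))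
    (u : K) (hu : u ≠ 0)
    (w : Fin m → K)
    (hw : (Odd m → w = fun i : Fin m => if (i : ℕ) < m - 1 then
            (if (i : ℕ) % 2 = 0 then 1 else -1) else u * m) ∧
          (Even m → w = fun i : Fin m => if (i : ℕ) < m - 2 then
            (if (i : ℕ) % 2 = 0 then 1 else -1)
          else if (i : ℕ) = m - 2 then u * m else -a * u * m)) :
    QuadraticMap.Equivalent
      (((u • Algebra.traceForm K (AdjoinRoot (X ^ m + C a : K[X]))) :
        LinearMap.BilinMap K (AdjoinRoot (X ^ m + C a : K[X])) K).toQuadraticMap)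
      (QuadraticMap.weightedSumSquares K w) :=
  trace_form_adjoin_mth_root_general m hchar a ha u hu w hw
end

section
/- Let k be an algebraically closed field, m ≥ 2 coprime to char(k), and F_0,…,F_r ∈ k[X_0,…,X_n] homogeneous of degree m with n ≥ r+2. Assume the projective scheme X = V(F_0,…,F_r) ⊂ P^n is a smooth complete intersection (in particular, at every point of X the gradient vectors (∂F_i/∂X_0,…,∂F_i/∂X_n), 0 ≤ i ≤ r, are linearly independent). Set F = Y_0F_0 + ⋯ + Y_rF_r. Then there is no point (y_0,…,y_r,x_0,…,x_n) with (y_0,…,y_r) ≠ 0, (x_0,…,x_n) ≠ 0, at which F and all partial derivatives ∂F/∂Y_i (0 ≤ i ≤ r) and ∂F/∂X_j (0 ≤ j ≤ n) simultaneously vanish; i.e., the hypersurface V(F) ⊂ P^r × P^n is smooth. -/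
open MvPolynomial

/-- Smoothness of the bidegree-`(1,m)` hypersurface `V(F) ⊂ P^r × P^n`, where
`F = Y_0F_0 + ⋯ + Y_rF_r` and `X = V(F_0,…,F_r)` is a smooth complete intersection:
there is no point `(y, x)` with `y ≠ 0`, `x ≠ 0` at which `F` and all its partial
derivatives vanish. -/
theorem bihypersurface_smooth
    {k : Type*} [Field k] [IsAlgClosed k] (r n m : ℕ) (hm : 2 ≤ m)
    (hrn : r + 2 ≤ n) (hmk : (m : k) ≠ 0)
    (F' : Fin (r + 1) → MvPolynomial (Fin (n + 1)) k)
    (hhom : ∀ i, (F' i).IsHomogeneous m)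
    -- at every point of `X = V(F_0,…,F_r)` the gradient vectors are linearly independent
    (hsmooth : ∀ x : Fin (n + 1) → k, x ≠ 0 → (∀ i, eval x (F' i) = 0) →
      LinearIndependent k (fun i : Fin (r + 1) => fun j : Fin (n + 1) =>
        eval x (pderiv j (F' i))))
    (F : MvPolynomial (Fin (r + 1) ⊕ Fin (n + 1)) k)
    (hF : F = ∑ i : Fin (r + 1), X (Sum.inl i) * rename Sum.inr (F' i)) :
    ¬ ∃ (y : Fin (r + 1) → k) (x : Fin (n + 1) → k), y ≠ 0 ∧ x ≠ 0 ∧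
        eval (Sum.elim y x) F = 0 ∧
        (∀ i : Fin (r + 1), eval (Sum.elim y x) (pderiv (Sum.inl i) F) = 0) ∧
        (∀ j : Fin (n + 1), eval (Sum.elim y x) (pderiv (Sum.inr j) F) = 0) := by
  rintro ⟨y, x, hy, hx, -, hY, hX⟩
  classical
  -- ∂F/∂Y_i = F_i (renamed), evaluating gives eval x (F' i)
  have hzero : ∀ i i', pderiv (Sum.inl (α := Fin (r+1)) (β := Fin (n+1)) i)
      (rename Sum.inr (F' i') : MvPolynomial (Fin (r+1) ⊕ Fin (n+1)) k) = 0 := fun i i' ↦ by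
    apply pderiv_eq_zero_of_notMem_vars
    intro h
    obtain ⟨j, -, hj⟩ := Finset.mem_image.mp (vars_rename _ _ h)
    exact Sum.inl_ne_inr hj.symm
  have hFi : ∀ i, eval x (F' i) = 0 := by
    intro i
    have := hY i
    rw [hF, map_sum] at this
    simp only [pderiv_mul, pderiv_X, hzero, mul_zero, add_zero] at this
    simp only [Pi.single_apply, Sum.inl.injEq, ite_smul, one_smul, zero_smul,
      map_sum, map_mul] at this
    rw [Finset.sum_eq_single i] at this
    · simpa [eval_rename, Sum.elim_comp_inr] using this
    · intro b _ hb
      simp [hzero, hb]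
    · simp
  have hgrad : ∀ j, ∑ i, y i * eval x (pderiv j (F' i)) = 0 := by
    intro j
    have := hX j
    rw [hF, map_sum] at this
    simp only [pderiv_mul, pderiv_X, Pi.single_apply] at this
    have hren : ∀ i, pderiv (Sum.inr (α := Fin (r+1)) j)
        (rename Sum.inr (F' i) : MvPolynomial (Fin (r+1) ⊕ Fin (n+1)) k)
        = rename Sum.inr (pderiv j (F' i)) := fun i ↦
      pderiv_rename Sum.inr_injective j (F' i)
    simp only [hren, fun i => if_neg (by simp : ¬ (Sum.inl i : Fin (r+1) ⊕ Fin (n+1)) = Sum.inr j)] at this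
    simpa [eval_rename, Sum.elim_comp_inr] using this
  have hli := hsmooth x hx hFi
  rw [Fintype.linearIndependent_iff] at hli
  apply hy
  funext i
  refine hli y ?_ i
  funext j
  simpa [mul_comm] using hgrad j
end

section
/- With J the Jacobian ring of the pencil of two generalized Fermat hypersurfaces as above, let p, q, r ∈ {0,…,n} be distinct. Then in J one has X_q^m·∏_{i ≠ p,q,r} L_i = −((a_pb_r − a_rb_p)/(a_pb_q − b_pa_q))·X_r^m·∏_{i ≠ p,q,r} L_i. -/
open MvPolynomial

namespace FermatPencil

variable {k : Type*} [Field k]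

/-- The variable `Y_i` (`i = 0, 1`). -/
noncomputable def Yv (n : ℕ) (k : Type*) [Field k] (i : Fin 2) :
    MvPolynomial (Fin 2 ⊕ Fin (n + 1)) k := X (Sum.inl i)

/-- The variable `X_j`. -/
noncomputable def Xv (n : ℕ) (k : Type*) [Field k] (j : Fin (n + 1)) :
    MvPolynomial (Fin 2 ⊕ Fin (n + 1)) k := X (Sum.inr j)

/-- The linear form `L_i = a_iY_0 + b_iY_1`. -/
noncomputable def L (n : ℕ) {k : Type*} [Field k] (a b : Fin (n + 1) → k) (i : Fin (n + 1)) :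
    MvPolynomial (Fin 2 ⊕ Fin (n + 1)) k :=
  C (a i) * Yv n k 0 + C (b i) * Yv n k 1

/-- The generalized Fermat polynomial `Σ c_iX_i^m`. -/
noncomputable def fermat (n m : ℕ) {k : Type*} [Field k] (c : Fin (n + 1) → k) :
    MvPolynomial (Fin 2 ⊕ Fin (n + 1)) k :=
  ∑ i, C (c i) * Xv n k i ^ m

/-- The Jacobian ideal `(F_0, F_1, mL_0X_0^{m-1}, …, mL_nX_n^{m-1})` of the pencil
`F = Y_0F_0 + Y_1F_1` of two generalized Fermat hypersurfaces. -/
noncomputable def jacIdeal (n m : ℕ) {k : Type*} [Field k] (a b : Fin (n + 1) → k) :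
    Ideal (MvPolynomial (Fin 2 ⊕ Fin (n + 1)) k) :=
  Ideal.span ({fermat n m a, fermat n m b} ∪
    Set.range (fun i : Fin (n + 1) => C (m : k) * L n a b i * Xv n k i ^ (m - 1)))

set_option maxHeartbeats 2000000 in
/-- In the Jacobian ring `J` of the pencil of two generalized Fermat hypersurfaces, for
distinct `p, q, r` one has
`X_q^m·∏_{i∉{p,q,r}} L_i = −((a_pb_r − a_rb_p)/(a_pb_q − b_pa_q))·X_r^m·∏_{i∉{p,q,r}} L_i`. -/
theorem Xq_pow_m_relation (n m : ℕ) (hn : 2 ≤ n) (hm : 2 ≤ m) (hmk : (m : k) ≠ 0)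
    (a b : Fin (n + 1) → k) (ha : ∀ i, a i ≠ 0) (hb : ∀ i, b i ≠ 0)
    (hcross : ∀ i j, i ≠ j → a i * b j - a j * b i ≠ 0)
    (p q r : Fin (n + 1)) (hpq : p ≠ q) (hpr : p ≠ r) (hqr : q ≠ r) :
    Ideal.Quotient.mk (jacIdeal n m a b)
        (Xv n k q ^ m * ∏ i ∈ ({p, q, r}ᶜ : Finset (Fin (n + 1))), L n a b i) =
      Ideal.Quotient.mk (jacIdeal n m a b)
        (- (C ((a p * b r - a r * b p) / (a p * b q - b p * a q)) *
            (Xv n k r ^ m * ∏ i ∈ ({p, q, r}ᶜ : Finset (Fin (n + 1))), L n a b i))) := by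
  set φ := Ideal.Quotient.mk (jacIdeal n m a b) with hφ
  have hmem : ∀ x ∈ ({fermat n m a, fermat n m b} ∪
      Set.range (fun i : Fin (n+1) => C (m:k) * L n a b i * Xv n k i ^ (m-1)) :
      Set (MvPolynomial (Fin 2 ⊕ Fin (n + 1)) k)), x ∈ jacIdeal n m a b :=
    fun x hx => Ideal.subset_span hx
  have hF0 : φ (fermat n m a) = 0 := by
    rw [hφ, Ideal.Quotient.eq_zero_iff_mem]
    exact hmem _ (Or.inl (Or.inl rfl))
  have hF1 : φ (fermat n m b) = 0 := by
    rw [hφ, Ideal.Quotient.eq_zero_iff_mem]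
    exact hmem _ (Or.inl (Or.inr rfl))
  have hLX : ∀ i, φ (L n a b i * Xv n k i ^ (m-1)) = 0 := by
    intro i
    rw [hφ, Ideal.Quotient.eq_zero_iff_mem]
    have h := hmem _ (Or.inr ⟨i, rfl⟩)
    have he : L n a b i * Xv n k i ^ (m-1)
        = C (m:k)⁻¹ * (C (m:k) * L n a b i * Xv n k i ^ (m-1)) := by
      rw [← mul_assoc, ← mul_assoc, ← C_mul, inv_mul_cancel₀ hmk, C_1, one_mul]
    rw [he]
    exact Ideal.mul_mem_left _ _ h
  have hLXm : ∀ i, φ (L n a b i) * φ (Xv n k i ^ m) = 0 := by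
    intro i
    have hm1 : m = (m-1) + 1 := by omega
    have : Xv n k i ^ m = Xv n k i ^ (m-1) * Xv n k i := by
      conv_lhs => rw [hm1, pow_succ]
    rw [this, ← map_mul, ← mul_assoc, map_mul, hLX, zero_mul]
  set c : Fin (n+1) → k := fun i => a p * b i - b p * a i with hc
  have hpoly : C (a p) * fermat n m b - C (b p) * fermat n m a
      = ∑ i, C (c i) * Xv n k i ^ m := by
    simp only [fermat, Finset.mul_sum, ← Finset.sum_sub_distrib]
    refine Finset.sum_congr rfl fun i _ => ?_
    rw [hc]; simp only [C_sub, C_mul]; ring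
  have hsum : ∑ i, φ (C (c i)) * φ (Xv n k i ^ m) = 0 := by
    have : φ (∑ i, C (c i) * Xv n k i ^ m) = 0 := by
      rw [← hpoly, map_sub, map_mul, map_mul, hF0, hF1, mul_zero, mul_zero, sub_zero]
    simpa [map_sum] using this
  set S : Finset (Fin (n+1)) := ({p, q, r}ᶜ : Finset (Fin (n+1))) with hS
  set PQ : MvPolynomial (Fin 2 ⊕ Fin (n + 1)) k ⧸ jacIdeal n m a b :=
    ∏ i ∈ S, φ (L n a b i) with hPQ
  have hzero : ∀ i ∈ S, φ (C (c i)) * φ (Xv n k i ^ m) * PQ = 0 := by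
    intro i hi
    rw [hPQ, ← Finset.mul_prod_erase S _ hi, ← mul_assoc, mul_comm (φ (C (c i)) * φ (Xv n k i ^ m)) (φ (L n a b i)), ← mul_assoc, mul_comm (φ (L n a b i)) (φ (C (c i))), mul_assoc (φ (C (c i))), hLXm, mul_zero, zero_mul]
  have hsum2 : ∑ i, φ (C (c i)) * φ (Xv n k i ^ m) * PQ = 0 := by
    rw [← Finset.sum_mul, hsum, zero_mul]
  have hsplit : Finset.univ = S ∪ ({p, q, r} : Finset (Fin (n+1))) := by
    rw [hS, Finset.union_comm]
    exact (Finset.union_compl _).symm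
  have hdisj : Disjoint S ({p, q, r} : Finset (Fin (n+1))) := by
    rw [hS]; exact disjoint_compl_left
  have hsum3 : ∑ i ∈ ({p, q, r} : Finset (Fin (n+1))), φ (C (c i)) * φ (Xv n k i ^ m) * PQ = 0 := by
    have h4 := Finset.sum_compl_add_sum ({p, q, r} : Finset (Fin (n+1)))
      (fun i => φ (C (c i)) * φ (Xv n k i ^ m) * PQ)
    rw [hsum2, ← hS, Finset.sum_eq_zero hzero, zero_add] at h4
    exact h4
  have hcp : c p = 0 := by rw [hc]; ring
  have hqr' : q ∉ ({r} : Finset (Fin (n+1))) := by simp [hqr]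
  have hpqr : p ∉ ({q, r} : Finset (Fin (n+1))) := by simp [hpq, hpr]
  rw [Finset.sum_insert hpqr, Finset.sum_insert hqr', Finset.sum_singleton, hcp] at hsum3
  simp only [map_zero, zero_mul, zero_add] at hsum3
  -- hsum3 : φ (C (c q)) * φ (Xv q ^ m) * PQ + φ (C (c r)) * φ (Xv r ^ m) * PQ = 0
  have hcq : c q ≠ 0 := fun h0 => hcross p q hpq (by simp only [hc] at h0; linear_combination h0)
  have hu : φ (C (c q)⁻¹) * φ (C (c q)) = 1 := by
    rw [← map_mul, ← C_mul, inv_mul_cancel₀ hcq, C_1, map_one]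
  have hγ : φ (C (c r / c q)) = φ (C (c q)⁻¹) * φ (C (c r)) := by
    rw [← map_mul, ← C_mul, div_eq_inv_mul]
  have key : φ (Xv n k q ^ m) * PQ = - (φ (C ((c r) / (c q))) * (φ (Xv n k r ^ m) * PQ)) := by
    linear_combination (φ (C (c q)⁻¹)) * hsum3 + (φ (Xv n k r ^ m) * PQ) * hγ
      - (φ (Xv n k q ^ m) * PQ) * hu
  have hgoal1 : (a p * b r - a r * b p) / (a p * b q - b p * a q) = c r / c q := by
    rw [hc]; ring_nf
  rw [map_neg, map_mul, map_mul, map_prod, map_mul, map_prod, hgoal1]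
  exact key

end FermatPencil
end

section
/- With J the Jacobian ring of the pencil of two generalized Fermat hypersurfaces as above, fix distinct k, l ∈ {0,…,n} and set A_j = X_j^m · X_0^{m-2}⋯X_n^{m-2} · ∏_{i ≠ j,k,l} L_i for j ∉ {k,l}. Then for distinct j, j' ∉ {k,l}: A_j = ((a_{j'}b_k − a_kb_{j'})(a_lb_{j'} − a_{j'}b_l))/((a_jb_k − a_kb_j)(a_lb_j − a_jb_l)) · A_{j'} in J. In particular the bidegree-(n−2, (n+3)m − 2(n+1)) graded piece of J is at most one-dimensional over k. -/
/-!
Write `[i, j] = a_i b_j - a_j b_i` and `P = ∏_t X_t^{m-2} · ∏_{i ∉ {j, j', k, l}} L_i`, so that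
`A_j = X_j^m P L_{j'}` and `A_{j'} = X_{j'}^m P L_j`. Since `X_i^m L_i = 0` in `J` and
`b_k F_0 - a_k F_1 = ∑_i [i, k] X_i^m`, multiplying the latter by `P L_l` leaves
`[j, k] X_j^m P L_l + [j', k] X_{j'}^m P L_l = 0` in `J`, and Cramer's rule
`[j, j'] L_l = [j, l] L_{j'} - [j', l] L_j` turns this into
`[j, k][j, l] A_j = [j', k][j', l] A_{j'}`.

The graded piece is in fact zero. Four distinct indices force `n ≥ 3`, so a monomial of that
bidegree contains some `Y_s`, and its `X`-degree `(n + 1)(m - 2) + 2m` forces it to be divisible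
either by `Y_s X_i^{m-1} X_{i'}^{m-1}` with `i ≠ i'`, which lies in the Jacobian ideal because `Y_s`
is a combination of `L_i` and `L_{i'}`, or by `Y_s X_i^{2m-1}`, which the Fermat equations reduce
to the first case by trading `X_i^m` for the other `X_x^m`.
-/

open MvPolynomial

namespace FermatPencil

variable {k : Type*} [Field k]

/-- The generator `A_j = X_j^m·X_0^{m-2}⋯X_n^{m-2}·∏_{i∉{j,k,l}}L_i`. -/
noncomputable def Agen (n m : ℕ) {k : Type*} [Field k] (a b : Fin (n + 1) → k)
    (j kk l : Fin (n + 1)) : MvPolynomial (Fin 2 ⊕ Fin (n + 1)) k :=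
  Xv n k j ^ m * (∏ t, Xv n k t ^ (m - 2)) *
    ∏ i ∈ ({j, kk, l}ᶜ : Finset (Fin (n + 1))), L n a b i

variable {n m : ℕ} {a b : Fin (n + 1) → k}

lemma sum_mem_of_sum_univ_mem {R ι : Type*} [CommRing R] [Fintype ι] [DecidableEq ι]
    {I : Ideal R} {f : ι → R} (s : Finset ι) (h : ∑ x, f x ∈ I) (hf : ∀ x ∉ s, f x ∈ I) :
    ∑ x ∈ s, f x ∈ I := by
  rw [← Finset.sum_add_sum_compl s f] at h
  exact (I.add_mem_iff_left (I.sum_mem fun x hx => hf x (Finset.mem_compl.1 hx))).1 h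

lemma prod_compl_eq_mul_prod_compl_insert {ι M : Type*} [Fintype ι] [DecidableEq ι]
    [CommMonoid M] (f : ι → M) {s : Finset ι} {x : ι} (hx : x ∉ s) :
    ∏ i ∈ sᶜ, f i = f x * ∏ i ∈ (insert x s)ᶜ, f i := by
  rw [Finset.compl_insert, Finset.mul_prod_erase _ _ (Finset.mem_compl.2 hx)]

lemma exists_pair_lt_or_exists_le {ι : Type*} [Fintype ι] [Nonempty ι] [DecidableEq ι]
    (e : ι → ℕ) {r s : ℕ} (h : (Fintype.card ι - 1) * r + s ≤ ∑ i, e i) :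
    (∃ i i', i ≠ i' ∧ r < e i ∧ r < e i') ∨ ∃ i, s ≤ e i := by
  obtain ⟨i₀, -, hmax⟩ := Finset.exists_max_image Finset.univ e Finset.univ_nonempty
  by_cases hpair : ∃ i, i ≠ i₀ ∧ r < e i
  · obtain ⟨i, hne, hi⟩ := hpair
    exact Or.inl ⟨i, i₀, hne, hi, hi.trans_le (hmax i (Finset.mem_univ _))⟩
  push Not at hpair
  have hrest : ∑ i ∈ Finset.univ.erase i₀, e i ≤ (Fintype.card ι - 1) * r := by
    calc ∑ i ∈ Finset.univ.erase i₀, e i ≤ ∑ _i ∈ Finset.univ.erase i₀, r :=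
          Finset.sum_le_sum fun i hi => hpair i (Finset.ne_of_mem_erase hi)
      _ = (Fintype.card ι - 1) * r := by
          rw [Finset.sum_const, Finset.card_erase_of_mem (Finset.mem_univ _), Finset.card_univ,
            smul_eq_mul]
  rw [← Finset.add_sum_erase _ _ (Finset.mem_univ i₀)] at h
  exact Or.inr ⟨i₀, by omega⟩

lemma weight_sumElim_apply {σ τ : Type*} [Fintype σ] [Fintype τ] (d : σ ⊕ τ →₀ ℕ) :
    Finsupp.weight (Sum.elim (fun _ : σ => ((1 : ℕ), (0 : ℕ))) (fun _ : τ => ((0 : ℕ), (1 : ℕ))))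
      d = (∑ s, d (Sum.inl s), ∑ t, d (Sum.inr t)) := by
  rw [Finsupp.weight_apply, Finsupp.sum_fintype _ _ (by simp), Fintype.sum_sum_type]
  simp only [Sum.elim_inl, Sum.elim_inr, Prod.smul_mk, smul_eq_mul, mul_one, mul_zero]
  rw [← prod_mk_sum, ← prod_mk_sum, Finset.sum_const_zero, Finset.sum_const_zero, Prod.mk_add_mk,
    add_zero, zero_add]

lemma monomial_mem_of_le {R σ : Type*} [CommSemiring R] {I : Ideal (MvPolynomial σ R)}
    {d e : σ →₀ ℕ} (hed : e ≤ d) (he : monomial e 1 ∈ I) (c : R) : monomial d c ∈ I :=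
  I.mem_of_dvd (monomial_dvd_monomial.2 ⟨Or.inr hed, one_dvd c⟩) he

def minor (a b : Fin (n + 1) → k) (i j : Fin (n + 1)) : k := a i * b j - a j * b i

lemma minor_self (i : Fin (n + 1)) : minor a b i i = 0 := sub_self _

lemma minor_swap (i j : Fin (n + 1)) : minor a b j i = -minor a b i j := by
  simp only [minor]; ring

/-- Cramer's rule for three vectors `(a_i, b_i)` in the plane. -/
lemma C_minor_mul_L (i j l : Fin (n + 1)) :
    C (minor a b i j) * L n a b l =
      C (minor a b i l) * L n a b j - C (minor a b j l) * L n a b i := by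
  simp only [minor, L, map_sub, map_mul]; ring

lemma Y_mem_span_L_pair {i i' : Fin (n + 1)} (h : minor a b i i' ≠ 0) (s : Fin 2) :
    Yv n k s ∈ Ideal.span {L n a b i, L n a b i'} := by
  rw [← Ideal.unit_mul_mem_iff_mem _ ((isUnit_iff_ne_zero.2 h).map C), Ideal.mem_span_pair]
  revert s
  refine Fin.forall_fin_two.2 ⟨⟨C (b i'), -C (b i), ?_⟩, ⟨-C (a i'), C (a i), ?_⟩⟩ <;>
    simp only [minor, L, map_sub, map_mul] <;> ring

lemma Agen_eq_mul_L {j kk l x : Fin (n + 1)} (hx : x ∉ ({j, kk, l} : Finset (Fin (n + 1)))) :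
    Agen n m a b j kk l = Xv n k j ^ m *
      ((∏ t, Xv n k t ^ (m - 2)) * ∏ i ∈ (insert x {j, kk, l})ᶜ, L n a b i) * L n a b x := by
  rw [Agen, prod_compl_eq_mul_prod_compl_insert _ hx]
  ring

section JacobianIdeal

lemma fermat_mem_jacIdeal_left : fermat n m a ∈ jacIdeal n m a b :=
  Ideal.subset_span (Or.inl (Or.inl rfl))

lemma fermat_mem_jacIdeal_right : fermat n m b ∈ jacIdeal n m a b :=
  Ideal.subset_span (Or.inl (Or.inr rfl))

/-- The combination `b_t F_0 - a_t F_1`, from which `X_t^m` is eliminated. -/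
lemma sum_C_minor_mul_X_pow_mem (t : Fin (n + 1)) :
    ∑ i, C (minor a b i t) * Xv n k i ^ m ∈ jacIdeal n m a b := by
  have h : ∑ i, C (minor a b i t) * Xv n k i ^ m =
      C (b t) * fermat n m a - C (a t) * fermat n m b := by
    simp only [fermat, Finset.mul_sum, ← Finset.sum_sub_distrib, minor, map_sub, map_mul]
    exact Finset.sum_congr rfl fun i _ => by ring
  rw [h]
  exact sub_mem (Ideal.mul_mem_left _ _ fermat_mem_jacIdeal_left)
    (Ideal.mul_mem_left _ _ fermat_mem_jacIdeal_right)

variable (hmk : (m : k) ≠ 0)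
include hmk

lemma L_mul_X_pow_mem (i : Fin (n + 1)) :
    L n a b i * Xv n k i ^ (m - 1) ∈ jacIdeal n m a b := by
  rw [← Ideal.unit_mul_mem_iff_mem _ ((isUnit_iff_ne_zero.2 hmk).map C), ← mul_assoc]
  exact Ideal.subset_span (Or.inr ⟨i, rfl⟩)

lemma X_pow_mul_mem_of_L_dvd {i : Fin (n + 1)} {q : MvPolynomial (Fin 2 ⊕ Fin (n + 1)) k}
    (h : L n a b i ∣ q) : Xv n k i ^ m * q ∈ jacIdeal n m a b := by
  obtain ⟨r, rfl⟩ := h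
  obtain ⟨m, rfl⟩ := Nat.exists_eq_add_one_of_ne_zero (ne_zero_of_map (f := Nat.castRingHom k) hmk)
  have hL := L_mul_X_pow_mem hmk (a := a) (b := b) i
  rw [Nat.add_sub_cancel] at hL
  rw [show Xv n k i ^ (m + 1) * (L n a b i * r) = (Xv n k i * r) * (L n a b i * Xv n k i ^ m) by
    ring]
  exact Ideal.mul_mem_left _ _ hL

variable {j j' kk l : Fin (n + 1)}

lemma C_mul_Agen_sub_C_mul_Agen_mem (hj : j ≠ kk ∧ j ≠ l)
    (hj' : j' ≠ kk ∧ j' ≠ l) (hjj' : j ≠ j') :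
    C (minor a b j kk * minor a b j l) * Agen n m a b j kk l -
      C (minor a b j' kk * minor a b j' l) * Agen n m a b j' kk l ∈ jacIdeal n m a b := by
  set P := (∏ t, Xv n k t ^ (m - 2)) * ∏ i ∈ (insert j' {j, kk, l} : Finset _)ᶜ, L n a b i
  have hAj : Agen n m a b j kk l = Xv n k j ^ m * P * L n a b j' :=
    Agen_eq_mul_L (by simp [hjj'.symm, hj'.1, hj'.2])
  have hAj' : Agen n m a b j' kk l = Xv n k j' ^ m * P * L n a b j := by
    rw [Agen_eq_mul_L (x := j) (by simp [hjj', hj.1, hj.2]), Finset.insert_comm]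
  -- eliminating `X_kk^m` and multiplying by `P L_l` kills every term but those of `j, j'`
  have hE : C (minor a b j kk) * Xv n k j ^ m * (P * L n a b l) +
      C (minor a b j' kk) * Xv n k j' ^ m * (P * L n a b l) ∈ jacIdeal n m a b := by
    rw [← Finset.sum_pair (f := fun i => C (minor a b i kk) * Xv n k i ^ m * (P * L n a b l)) hjj']
    refine sum_mem_of_sum_univ_mem _ ?_ fun i hi => ?_
    · rw [← Finset.sum_mul]
      exact Ideal.mul_mem_right _ _ (sum_C_minor_mul_X_pow_mem kk)
    by_cases hik : i = kk
    · simp [hik, minor_self]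
    rw [mul_assoc]
    refine Ideal.mul_mem_left _ _ (X_pow_mul_mem_of_L_dvd hmk ?_)
    by_cases hil : i = l
    · exact hil ▸ dvd_mul_left _ _
    · refine dvd_mul_of_dvd_left (dvd_mul_of_dvd_right (Finset.dvd_prod_of_mem _ ?_) _) _
      simp only [Finset.mem_insert, Finset.mem_singleton, not_or] at hi
      simp [hi, hik, hil]
  have hj0 : Xv n k j ^ m * (P * L n a b j) ∈ jacIdeal n m a b :=
    X_pow_mul_mem_of_L_dvd hmk (dvd_mul_left _ _)
  have hj'0 : Xv n k j' ^ m * (P * L n a b j') ∈ jacIdeal n m a b :=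
    X_pow_mul_mem_of_L_dvd hmk (dvd_mul_left _ _)
  have key : C (minor a b j kk * minor a b j l) * Agen n m a b j kk l -
      C (minor a b j' kk * minor a b j' l) * Agen n m a b j' kk l =
      C (minor a b j j') * (C (minor a b j kk) * Xv n k j ^ m * (P * L n a b l) +
        C (minor a b j' kk) * Xv n k j' ^ m * (P * L n a b l)) +
      C (minor a b j kk) * C (minor a b j' l) * (Xv n k j ^ m * (P * L n a b j)) -
      C (minor a b j' kk) * C (minor a b j l) * (Xv n k j' ^ m * (P * L n a b j')) := by
    rw [hAj, hAj', map_mul, map_mul]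
    linear_combination (-(C (minor a b j kk) * Xv n k j ^ m * P +
      C (minor a b j' kk) * Xv n k j' ^ m * P)) * C_minor_mul_L (a := a) (b := b) j j' l
  rw [key]
  exact sub_mem (add_mem (Ideal.mul_mem_left _ _ hE) (Ideal.mul_mem_left _ _ hj0))
    (Ideal.mul_mem_left _ _ hj'0)

lemma mk_Agen_eq (hjk : minor a b j kk ≠ 0) (hjl : minor a b j l ≠ 0)
    (hj : j ≠ kk ∧ j ≠ l) (hj' : j' ≠ kk ∧ j' ≠ l) (hjj' : j ≠ j') :
    Ideal.Quotient.mk (jacIdeal n m a b) (Agen n m a b j kk l) =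
      Ideal.Quotient.mk (jacIdeal n m a b)
        (C ((minor a b j' kk * minor a b l j') / (minor a b j kk * minor a b l j)) *
          Agen n m a b j' kk l) := by
  rw [minor_swap j' l, minor_swap j l, mul_neg, mul_neg, neg_div_neg_eq]
  refine Ideal.Quotient.eq.2 ?_
  convert Ideal.mul_mem_left _ (C (minor a b j kk * minor a b j l)⁻¹)
    (C_mul_Agen_sub_C_mul_Agen_mem hmk hj hj' hjj') using 1
  simp only [mul_sub, ← mul_assoc, ← map_mul, inv_mul_cancel₀ (mul_ne_zero hjk hjl), map_one,
    one_mul, div_eq_inv_mul]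

lemma Y_mul_X_pow_mul_X_pow_mem {i i' : Fin (n + 1)} (h : minor a b i i' ≠ 0) (s : Fin 2) :
    Yv n k s * Xv n k i ^ (m - 1) * Xv n k i' ^ (m - 1) ∈ jacIdeal n m a b := by
  obtain ⟨u, v, huv⟩ := Ideal.mem_span_pair.1 (Y_mem_span_L_pair h s)
  rw [← huv, show (u * L n a b i + v * L n a b i') * Xv n k i ^ (m - 1) * Xv n k i' ^ (m - 1) =
      u * Xv n k i' ^ (m - 1) * (L n a b i * Xv n k i ^ (m - 1)) +
        v * Xv n k i ^ (m - 1) * (L n a b i' * Xv n k i' ^ (m - 1)) by ring]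
  exact add_mem (Ideal.mul_mem_left _ _ (L_mul_X_pow_mem hmk i))
    (Ideal.mul_mem_left _ _ (L_mul_X_pow_mem hmk i'))

lemma Y_mul_X_pow_mem (hcross : ∀ i j, i ≠ j → minor a b i j ≠ 0) {i t : Fin (n + 1)}
    (hit : i ≠ t) (s : Fin 2) : Yv n k s * Xv n k i ^ (2 * m - 1) ∈ jacIdeal n m a b := by
  obtain ⟨m, rfl⟩ := Nat.exists_eq_add_one_of_ne_zero (ne_zero_of_map (f := Nat.castRingHom k) hmk)
  rw [← Ideal.unit_mul_mem_iff_mem _ ((isUnit_iff_ne_zero.2 (hcross i t hit)).map C)]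
  -- eliminating `X_t^m` trades `X_i^m` for the other `X_x^m`, each of which pairs with `X_i^(m-1)`
  have hsum := sum_mem_of_sum_univ_mem {i}
    (f := fun x => C (minor a b x t) * Xv n k x ^ (m + 1) * (Yv n k s * Xv n k i ^ m))
    (by
      rw [← Finset.sum_mul]
      exact Ideal.mul_mem_right _ _ (sum_C_minor_mul_X_pow_mem t))
    (fun x hx => by
      have hpair := Y_mul_X_pow_mul_X_pow_mem hmk (hcross x i (by simpa using hx)) s
      rw [Nat.add_sub_cancel] at hpair
      rw [show C (minor a b x t) * Xv n k x ^ (m + 1) * (Yv n k s * Xv n k i ^ m) =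
          C (minor a b x t) * Xv n k x * (Yv n k s * Xv n k x ^ m * Xv n k i ^ m) by ring]
      exact Ideal.mul_mem_left _ _ hpair)
  rw [Finset.sum_singleton] at hsum
  convert hsum using 1
  rw [show 2 * (m + 1) - 1 = m + 1 + m by omega, pow_add]
  ring

lemma monomial_mem_jacIdeal (hn : 3 ≤ n) (hm : 2 ≤ m) (hcross : ∀ i j, i ≠ j → minor a b i j ≠ 0)
    {d : Fin 2 ⊕ Fin (n + 1) →₀ ℕ} (hY : ∑ s, d (Sum.inl s) = n - 2)
    (hX : ∑ i, d (Sum.inr i) = (n + 3) * m - 2 * (n + 1)) (c : k) :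
    monomial d c ∈ jacIdeal n m a b := by
  obtain ⟨s, -, hs⟩ := Finset.exists_lt_of_sum_lt (s := Finset.univ) (f := fun _ => 0)
    (g := fun s => d (Sum.inl s)) (by simp only [Finset.sum_const_zero, hY]; omega)
  have hdeg : (Fintype.card (Fin (n + 1)) - 1) * (m - 2) + (2 * m - 1) ≤ ∑ i, d (Sum.inr i) := by
    obtain ⟨p, rfl⟩ : ∃ p, m = p + 2 := ⟨m - 2, by omega⟩
    rw [hX, Fintype.card_fin]
    have : (n + 3) * (p + 2) = n * p + 3 * p + 2 * n + 6 := by ring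
    simp only [Nat.add_sub_cancel]
    omega
  rcases exists_pair_lt_or_exists_le (fun i => d (Sum.inr i)) hdeg with
    ⟨i, i', hii', hi, hi'⟩ | ⟨i, hi⟩
  · refine monomial_mem_of_le (e := Finsupp.single (Sum.inl s) 1 +
      Finsupp.single (Sum.inr i) (m - 1) + Finsupp.single (Sum.inr i') (m - 1)) ?_ ?_ c
    · refine Finsupp.le_def.2 fun x => ?_
      rcases x with x | x <;> simp only [Finsupp.add_apply, Finsupp.single_apply, Sum.inl.injEq,
        Sum.inr.injEq, reduceCtorEq, if_false] <;> split_ifs <;> subst_vars <;> omega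
    · convert Y_mul_X_pow_mul_X_pow_mem hmk (hcross i i' hii') s using 1
      rw [Yv, Xv, Xv, X_pow_eq_monomial, X_pow_eq_monomial, X, monomial_mul, monomial_mul,
        one_mul, one_mul]
  · have : Nontrivial (Fin (n + 1)) := Fin.nontrivial_iff_two_le.2 (by omega)
    obtain ⟨t, hit⟩ := exists_ne i
    refine monomial_mem_of_le (e := Finsupp.single (Sum.inl s) 1 +
      Finsupp.single (Sum.inr i) (2 * m - 1)) ?_ ?_ c
    · refine Finsupp.le_def.2 fun x => ?_
      rcases x with x | x <;> simp only [Finsupp.add_apply, Finsupp.single_apply, Sum.inl.injEq,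
        Sum.inr.injEq, reduceCtorEq, if_false] <;> split_ifs <;> subst_vars <;> omega
    · convert Y_mul_X_pow_mem hmk hcross hit.symm s using 1
      rw [Yv, Xv, X_pow_eq_monomial, X, monomial_mul, one_mul]

lemma mem_jacIdeal_of_mem_weightedHomogeneousSubmodule (hn : 3 ≤ n) (hm : 2 ≤ m)
    (hcross : ∀ i j, i ≠ j → minor a b i j ≠ 0) {p : MvPolynomial (Fin 2 ⊕ Fin (n + 1)) k}
    (hp : p ∈ weightedHomogeneousSubmodule k
      (Sum.elim (fun _ : Fin 2 => ((1 : ℕ), (0 : ℕ))) (fun _ : Fin (n + 1) => ((0 : ℕ), (1 : ℕ))))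
      ((n - 2, (n + 3) * m - 2 * (n + 1)) : ℕ × ℕ)) :
    p ∈ jacIdeal n m a b := by
  rw [p.as_sum]
  refine Ideal.sum_mem _ fun d hd => ?_
  have hw := (mem_weightedHomogeneousSubmodule _ _ _ _).1 hp (mem_support_iff.1 hd)
  rw [weight_sumElim_apply, Prod.mk.injEq] at hw
  exact monomial_mem_jacIdeal hmk hn hm hcross hw.1 hw.2 _

end JacobianIdeal

theorem Agen_relation_and_dim_general (n m : ℕ) (hm : 2 ≤ m) (hmk : (m : k) ≠ 0)
    (a b : Fin (n + 1) → k)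
    (hcross : ∀ i j, i ≠ j → a i * b j - a j * b i ≠ 0)
    (kk l j j' : Fin (n + 1)) (hkl : kk ≠ l)
    (hj : j ≠ kk ∧ j ≠ l) (hj' : j' ≠ kk ∧ j' ≠ l) (hjj' : j ≠ j') :
    Ideal.Quotient.mk (jacIdeal n m a b) (Agen n m a b j kk l) =
      Ideal.Quotient.mk (jacIdeal n m a b)
        (C (((a j' * b kk - a kk * b j') * (a l * b j' - a j' * b l)) /
            ((a j * b kk - a kk * b j) * (a l * b j - a j * b l))) *
          Agen n m a b j' kk l) ∧
    Module.finrank k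
      (Submodule.map (Ideal.Quotient.mkₐ k (jacIdeal n m a b)).toLinearMap
        (weightedHomogeneousSubmodule k
          (Sum.elim (fun _ : Fin 2 => ((1 : ℕ), (0 : ℕ)))
            (fun _ : Fin (n + 1) => ((0 : ℕ), (1 : ℕ))))
          ((n - 2, (n + 3) * m - 2 * (n + 1)) : ℕ × ℕ))) ≤ 1 := by
  refine ⟨mk_Agen_eq hmk (hcross _ _ hj.1) (hcross _ _ hj.2) hj hj' hjj', ?_⟩
  have hn : 3 ≤ n := by omega
  rw [LinearMap.le_ker_iff_map.1 ?_, finrank_bot]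
  · exact zero_le_one
  intro p hp
  exact LinearMap.mem_ker.2 (Ideal.Quotient.eq_zero_iff_mem.2
    (mem_jacIdeal_of_mem_weightedHomogeneousSubmodule hmk hn hm hcross hp))

/-- In the Jacobian ring `J` of the pencil of two generalized Fermat hypersurfaces, for
distinct `j, j' ∉ {k, l}` one has
`A_j = ((a_{j'}b_k − a_kb_{j'})(a_lb_{j'} − a_{j'}b_l))/((a_jb_k − a_kb_j)(a_lb_j − a_jb_l))·A_{j'}`;
in particular the bidegree-`(n−2, (n+3)m − 2(n+1))` graded piece of `J` is at most
one-dimensional over `k`. -/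
theorem Agen_relation_and_dim (n m : ℕ) (hn : 2 ≤ n) (hm : 2 ≤ m) (hmk : (m : k) ≠ 0)
    (a b : Fin (n + 1) → k) (ha : ∀ i, a i ≠ 0) (hb : ∀ i, b i ≠ 0)
    (hcross : ∀ i j, i ≠ j → a i * b j - a j * b i ≠ 0)
    (kk l j j' : Fin (n + 1)) (hkl : kk ≠ l)
    (hj : j ≠ kk ∧ j ≠ l) (hj' : j' ≠ kk ∧ j' ≠ l) (hjj' : j ≠ j') :
    Ideal.Quotient.mk (jacIdeal n m a b) (Agen n m a b j kk l) =
      Ideal.Quotient.mk (jacIdeal n m a b)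
        (C (((a j' * b kk - a kk * b j') * (a l * b j' - a j' * b l)) /
            ((a j * b kk - a kk * b j) * (a l * b j - a j * b l))) *
          Agen n m a b j' kk l) ∧
    Module.finrank k
      (Submodule.map (Ideal.Quotient.mkₐ k (jacIdeal n m a b)).toLinearMap
        (weightedHomogeneousSubmodule k
          (Sum.elim (fun _ : Fin 2 => ((1 : ℕ), (0 : ℕ)))
            (fun _ : Fin (n + 1) => ((0 : ℕ), (1 : ℕ))))
          ((n - 2, (n + 3) * m - 2 * (n + 1)) : ℕ × ℕ))) ≤ 1 :=
  Agen_relation_and_dim_general n m hm hmk a b hcross kk l j j' hkl hj hj' hjj'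

end FermatPencil
end

section
/- With notation as above, suppose m = 2q is even. For a subset S = {i_0,…,i_{(n-2)/2}} ⊂ {0,…,n}∖{j,k,l} of cardinality (n−2)/2 (n even), set A_S = X_j^q · X_0^{q-1}⋯X_n^{q-1} · ∏_{i ∈ S} L_i. Then in the Jacobian ring J one has A_S² = (∏_{i ∈ S}(a_ib_j − a_jb_i) / ∏_{i ∉ S∪{j,k,l}}(a_ib_j − a_jb_i)) · A_j, where A_j = X_j^m·X_0^{m-2}⋯X_n^{m-2}·∏_{i ≠ j,k,l} L_i. -/
open MvPolynomial

namespace FermatPencil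

variable {k : Type*} [Field k]

/-- per-factor identity -/
lemma factor_id (n : ℕ) (a b : Fin (n + 1) → k) (i j : Fin (n + 1)) :
    C (a j) * L n a b i = C (a i) * L n a b j + C (a j * b i - a i * b j) * Yv n k 1 := by
  simp only [L, Yv, map_sub, map_mul]
  ring

/-- product congruence mod L_j -/
lemma prod_dvd (n : ℕ) (a b : Fin (n + 1) → k) (j : Fin (n + 1))
    (F : Finset (Fin (n + 1))) :
    L n a b j ∣ (∏ i ∈ F, (C (a j) * L n a b i)) -
      C (∏ i ∈ F, (a j * b i - a i * b j)) * Yv n k 1 ^ F.card := by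
  classical
  rw [← Ideal.mem_span_singleton, ← Ideal.Quotient.eq]
  have h1 : ∀ i ∈ F, Ideal.Quotient.mk (Ideal.span {L n a b j}) (C (a j) * L n a b i) =
      Ideal.Quotient.mk (Ideal.span {L n a b j})
        (C (a j * b i - a i * b j) * Yv n k 1) := by
    intro i _
    rw [Ideal.Quotient.eq, Ideal.mem_span_singleton]
    exact ⟨C (a i), by linear_combination factor_id n a b i j⟩
  calc Ideal.Quotient.mk (Ideal.span {L n a b j}) (∏ i ∈ F, (C (a j) * L n a b i))
      = ∏ i ∈ F, Ideal.Quotient.mk (Ideal.span {L n a b j}) (C (a j) * L n a b i) :=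
        map_prod _ _ _
    _ = ∏ i ∈ F, Ideal.Quotient.mk (Ideal.span {L n a b j})
          (C (a j * b i - a i * b j) * Yv n k 1) := Finset.prod_congr rfl h1
    _ = Ideal.Quotient.mk (Ideal.span {L n a b j})
          (∏ i ∈ F, (C (a j * b i - a i * b j) * Yv n k 1)) := (map_prod _ _ _).symm
    _ = Ideal.Quotient.mk (Ideal.span {L n a b j})
          (C (∏ i ∈ F, (a j * b i - a i * b j)) * Yv n k 1 ^ F.card) := by
        rw [Finset.prod_mul_distrib, Finset.prod_const, ← map_prod]

/-- key ideal membership -/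
lemma key_mem (n m : ℕ) (hm : 2 ≤ m) (hmk' : (m : k) ≠ 0) (a b : Fin (n + 1) → k)
    (j : Fin (n + 1)) (P : MvPolynomial (Fin 2 ⊕ Fin (n + 1)) k) :
    (Xv n k j ^ m * ∏ t, Xv n k t ^ (m - 2)) * (L n a b j * P) ∈ jacIdeal n m a b := by
  classical
  have hg : C (m : k) * L n a b j * Xv n k j ^ (m - 1) ∈ jacIdeal n m a b :=
    Ideal.subset_span (Or.inr ⟨j, rfl⟩)
  have h1 : (∏ t, Xv n k t ^ (m - 2)) =
      Xv n k j ^ (m - 2) * ∏ t ∈ Finset.univ.erase j, Xv n k t ^ (m - 2) :=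
    (Finset.mul_prod_erase _ _ (Finset.mem_univ j)).symm
  have h2 : (C (m : k) : MvPolynomial (Fin 2 ⊕ Fin (n + 1)) k) * C ((m : k)⁻¹) = 1 := by
    rw [← map_mul, mul_inv_cancel₀ hmk', map_one]
  have h3 : Xv n k j ^ m * Xv n k j ^ (m - 2) = Xv n k j ^ (m - 1) * Xv n k j ^ (m - 1) := by
    rw [← pow_add, ← pow_add]
    congr 1
    omega
  have heq : (Xv n k j ^ m * ∏ t, Xv n k t ^ (m - 2)) * (L n a b j * P) =
      (C (m : k) * L n a b j * Xv n k j ^ (m - 1)) *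
        (C ((m : k)⁻¹) * (Xv n k j ^ (m - 1) *
          (∏ t ∈ Finset.univ.erase j, Xv n k t ^ (m - 2)) * P)) := by
    rw [h1]
    calc (Xv n k j ^ m * (Xv n k j ^ (m - 2) * ∏ t ∈ Finset.univ.erase j, Xv n k t ^ (m - 2)))
          * (L n a b j * P)
        = (C (m : k) * C ((m : k)⁻¹)) * (L n a b j *
            (Xv n k j ^ m * Xv n k j ^ (m - 2)) *
            (∏ t ∈ Finset.univ.erase j, Xv n k t ^ (m - 2)) * P) := by rw [h2]; ring
      _ = _ := by rw [h3]; ring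
  rw [heq]
  exact Ideal.mul_mem_right _ _ hg


/-- For even `m = 2q` and a subset `S ⊂ {0,…,n}∖{j,k,l}` of cardinality `(n−2)/2` (`n`
even), the element `A_S = X_j^q·X_0^{q-1}⋯X_n^{q-1}·∏_{i∈S}L_i` of the Jacobian ring `J`
of the pencil of two generalized Fermat hypersurfaces satisfies
`A_S² = (∏_{i∈S}(a_ib_j−a_jb_i) / ∏_{i∉S∪{j,k,l}}(a_ib_j−a_jb_i))·A_j`. -/
theorem Asq_eq (n m q : ℕ) (hn : 2 ≤ n) (hneven : Even n) (hm : 2 ≤ m) (hq : m = 2 * q)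
    (hmk : ((2 * m : ℕ) : k) ≠ 0)
    (a b : Fin (n + 1) → k) (ha : ∀ i, a i ≠ 0) (hb : ∀ i, b i ≠ 0)
    (hcross : ∀ i j, i ≠ j → a i * b j - a j * b i ≠ 0)
    (j kk l : Fin (n + 1)) (hjk : j ≠ kk) (hjl : j ≠ l) (hkl : kk ≠ l)
    (S : Finset (Fin (n + 1))) (hS : S ⊆ ({j, kk, l}ᶜ : Finset (Fin (n + 1))))
    (hcard : S.card = (n - 2) / 2) :
    Ideal.Quotient.mk (jacIdeal n m a b)
        ((Xv n k j ^ q * (∏ t, Xv n k t ^ (q - 1)) * ∏ i ∈ S, L n a b i) ^ 2) =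
      Ideal.Quotient.mk (jacIdeal n m a b)
        (C ((∏ i ∈ S, (a i * b j - a j * b i)) /
            (∏ i ∈ (({j, kk, l}ᶜ : Finset (Fin (n + 1))) \ S), (a i * b j - a j * b i))) *
          Agen n m a b j kk l) := by
  classical
  have hq1 : 1 ≤ q := by omega
  have hmk' : (m : k) ≠ 0 := by
    intro h
    apply hmk
    push_cast
    rw [h, mul_zero]
  obtain ⟨w, hw⟩ := hneven
  set T : Finset (Fin (n + 1)) := ({j, kk, l}ᶜ : Finset (Fin (n + 1))) with hT
  have hjT : j ∉ T := by simp [hT]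
  have hcardT : T.card = n - 2 := by
    have h3 : ({j, kk, l} : Finset (Fin (n + 1))).card = 3 := by
      rw [Finset.card_insert_of_notMem (by simp [hjk, hjl]),
        Finset.card_insert_of_notMem (by simp [hkl]), Finset.card_singleton]
    rw [hT, Finset.card_compl, h3, Fintype.card_fin]
    omega
  have h2s : 2 * S.card = n - 2 := by omega
  have h2s' : S.card * 2 = n - 2 := by omega
  set M : MvPolynomial (Fin 2 ⊕ Fin (n + 1)) k :=
    Xv n k j ^ m * ∏ t, Xv n k t ^ (m - 2) with hM
  -- congruence lemma
  have hcong : ∀ P1 P2 : MvPolynomial (Fin 2 ⊕ Fin (n + 1)) k, L n a b j ∣ P1 - P2 →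
      Ideal.Quotient.mk (jacIdeal n m a b) (M * P1) =
        Ideal.Quotient.mk (jacIdeal n m a b) (M * P2) := by
    rintro P1 P2 ⟨Q, hQ⟩
    rw [Ideal.Quotient.eq]
    have h0 : M * P1 - M * P2 = M * (L n a b j * Q) := by rw [← mul_sub, hQ]
    rw [h0, hM]
    exact key_mem n m hm hmk' a b j Q
  set e : Fin (n + 1) → k := fun i => a j * b i - a i * b j with he
  set d : Fin (n + 1) → k := fun i => a i * b j - a j * b i with hd
  -- LHS polynomial rewriting
  have hLHS : (Xv n k j ^ q * (∏ t, Xv n k t ^ (q - 1)) * ∏ i ∈ S, L n a b i) ^ 2 =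
      M * (∏ i ∈ S, L n a b i) ^ 2 := by
    have h1 : q * 2 = m := by omega
    have h2 : (q - 1) * 2 = m - 2 := by omega
    rw [hM, mul_pow, mul_pow, ← pow_mul, h1, ← Finset.prod_pow]
    simp only [← pow_mul, h2]
  -- unit facts
  have hu : (C ((a j)⁻¹) ^ (n - 2) : MvPolynomial (Fin 2 ⊕ Fin (n + 1)) k) *
      C (a j) ^ (n - 2) = 1 := by
    rw [← mul_pow, ← map_mul, inv_mul_cancel₀ (ha j), map_one, one_pow]
  -- scalar identity
  have hTSne : (∏ i ∈ T \ S, d i) ≠ 0 := by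
    rw [Finset.prod_ne_zero_iff]
    intro i hi
    have hij : i ≠ j := by
      intro hh
      exact hjT (hh ▸ (Finset.mem_sdiff.mp hi).1)
    exact hcross i j hij
  have hsd : T.card - S.card = S.card := by
    rw [hcardT]
    omega
  have hprodneg : ∀ F : Finset (Fin (n + 1)), (∏ i ∈ F, d i) = (-1) ^ F.card * ∏ i ∈ F, e i := by
    intro F
    have : ∀ i ∈ F, d i = -1 * e i := by
      intro i _
      simp only [hd, he]
      ring
    rw [Finset.prod_congr rfl this, Finset.prod_mul_distrib, Finset.prod_const]
  have hscalar : ((∏ i ∈ S, d i) / (∏ i ∈ T \ S, d i)) * (∏ i ∈ T, e i) =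
      (∏ i ∈ S, e i) ^ 2 := by
    have hsplit : (∏ i ∈ T, e i) = (∏ i ∈ T \ S, e i) * ∏ i ∈ S, e i :=
      (Finset.prod_sdiff hS).symm
    have hTSne' : (∏ i ∈ T \ S, e i) ≠ 0 := by
      intro hh
      apply hTSne
      rw [hprodneg, hh, mul_zero]
    rw [hsplit, hprodneg S, hprodneg (T \ S), Finset.card_sdiff_of_subset hS, hsd]
    field_simp
  -- key congruences
  have hdvdS := prod_dvd n a b j S
  have hdvdT := prod_dvd n a b j T
  set A1 : MvPolynomial (Fin 2 ⊕ Fin (n + 1)) k := ∏ i ∈ S, (C (a j) * L n a b i) with hA1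
  set B1 : MvPolynomial (Fin 2 ⊕ Fin (n + 1)) k :=
    C (∏ i ∈ S, e i) * Yv n k 1 ^ S.card with hB1
  have hdvdS2 : L n a b j ∣ A1 ^ 2 - B1 ^ 2 := by
    have h := hdvdS.mul_right (A1 + B1)
    have hh : (A1 - B1) * (A1 + B1) = A1 ^ 2 - B1 ^ 2 := by ring
    rwa [hh] at h
  -- main key equality
  have key : Ideal.Quotient.mk (jacIdeal n m a b) (C (a j) ^ (n - 2) *
      (M * (∏ i ∈ S, L n a b i) ^ 2)) =
      Ideal.Quotient.mk (jacIdeal n m a b) (C (a j) ^ (n - 2) *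
      (C ((∏ i ∈ S, d i) / (∏ i ∈ T \ S, d i)) * (M * ∏ i ∈ T, L n a b i))) := by
    have hA : A1 = C (a j) ^ S.card * ∏ i ∈ S, L n a b i := by
      rw [hA1, Finset.prod_mul_distrib, Finset.prod_const]
    have hL1 : C (a j) ^ (n - 2) * (M * (∏ i ∈ S, L n a b i) ^ 2) = M * A1 ^ 2 := by
      rw [hA, mul_pow, ← pow_mul, h2s']
      ring
    have hR1 : C ((∏ i ∈ S, d i) / (∏ i ∈ T \ S, d i)) * (M * ∏ i ∈ T, (C (a j) * L n a b i))
        = C (a j) ^ (n - 2) *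
          (C ((∏ i ∈ S, d i) / (∏ i ∈ T \ S, d i)) * (M * ∏ i ∈ T, L n a b i)) := by
      rw [Finset.prod_mul_distrib, Finset.prod_const, hcardT]
      ring
    have hfinal : M * B1 ^ 2 = C ((∏ i ∈ S, d i) / (∏ i ∈ T \ S, d i)) *
        (M * (C (∏ i ∈ T, (a j * b i - a i * b j)) * Yv n k 1 ^ T.card)) := by
      have hc : (C ((∏ i ∈ S, e i) ^ 2) : MvPolynomial (Fin 2 ⊕ Fin (n + 1)) k) =
          C ((∏ i ∈ S, d i) / (∏ i ∈ T \ S, d i)) *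
            C (∏ i ∈ T, (a j * b i - a i * b j)) := by
        rw [← map_mul]
        congr 1
        exact hscalar.symm
      calc M * B1 ^ 2
          = C ((∏ i ∈ S, e i) ^ 2) * (M * Yv n k 1 ^ (n - 2)) := by
            rw [hB1, mul_pow, ← map_pow, ← pow_mul, h2s']
            ring
        _ = _ := by
            rw [hc, hcardT]
            ring
    calc Ideal.Quotient.mk (jacIdeal n m a b)
          (C (a j) ^ (n - 2) * (M * (∏ i ∈ S, L n a b i) ^ 2))
        = Ideal.Quotient.mk (jacIdeal n m a b) (M * A1 ^ 2) := by rw [hL1]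
      _ = Ideal.Quotient.mk (jacIdeal n m a b) (M * B1 ^ 2) := hcong _ _ hdvdS2
      _ = Ideal.Quotient.mk (jacIdeal n m a b)
            (C ((∏ i ∈ S, d i) / (∏ i ∈ T \ S, d i)) *
              (M * (C (∏ i ∈ T, (a j * b i - a i * b j)) * Yv n k 1 ^ T.card))) := by
          rw [hfinal]
      _ = Ideal.Quotient.mk (jacIdeal n m a b)
            (C ((∏ i ∈ S, d i) / (∏ i ∈ T \ S, d i))) *
          Ideal.Quotient.mk (jacIdeal n m a b)
            (M * (C (∏ i ∈ T, (a j * b i - a i * b j)) * Yv n k 1 ^ T.card)) := map_mul _ _ _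
      _ = Ideal.Quotient.mk (jacIdeal n m a b)
            (C ((∏ i ∈ S, d i) / (∏ i ∈ T \ S, d i))) *
          Ideal.Quotient.mk (jacIdeal n m a b)
            (M * ∏ i ∈ T, (C (a j) * L n a b i)) := by
          rw [hcong _ _ hdvdT]
      _ = Ideal.Quotient.mk (jacIdeal n m a b)
            (C ((∏ i ∈ S, d i) / (∏ i ∈ T \ S, d i)) *
              (M * ∏ i ∈ T, (C (a j) * L n a b i))) := (map_mul _ _ _).symm
      _ = Ideal.Quotient.mk (jacIdeal n m a b) (C (a j) ^ (n - 2) *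
            (C ((∏ i ∈ S, d i) / (∏ i ∈ T \ S, d i)) * (M * ∏ i ∈ T, L n a b i))) := by
          rw [hR1]
  -- conclude by cancelling the unit
  have hcancel : ∀ Z : MvPolynomial (Fin 2 ⊕ Fin (n + 1)) k,
      (C ((a j)⁻¹) ^ (n - 2) : MvPolynomial (Fin 2 ⊕ Fin (n + 1)) k) *
        (C (a j) ^ (n - 2) * Z) = Z := by
    intro Z
    rw [← mul_assoc, hu, one_mul]
  have hAgen : C ((∏ i ∈ S, d i) / (∏ i ∈ T \ S, d i)) * Agen n m a b j kk l =
      C ((∏ i ∈ S, d i) / (∏ i ∈ T \ S, d i)) * (M * ∏ i ∈ T, L n a b i) := by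
    rw [Agen, hM, hT]
  calc Ideal.Quotient.mk (jacIdeal n m a b)
        ((Xv n k j ^ q * (∏ t, Xv n k t ^ (q - 1)) * ∏ i ∈ S, L n a b i) ^ 2)
      = Ideal.Quotient.mk (jacIdeal n m a b) (C ((a j)⁻¹) ^ (n - 2) *
          (C (a j) ^ (n - 2) * (M * (∏ i ∈ S, L n a b i) ^ 2))) := by
        rw [hcancel, hLHS]
    _ = Ideal.Quotient.mk (jacIdeal n m a b) (C ((a j)⁻¹) ^ (n - 2)) *
          Ideal.Quotient.mk (jacIdeal n m a b)
            (C (a j) ^ (n - 2) * (M * (∏ i ∈ S, L n a b i) ^ 2)) := map_mul _ _ _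
    _ = Ideal.Quotient.mk (jacIdeal n m a b) (C ((a j)⁻¹) ^ (n - 2)) *
          Ideal.Quotient.mk (jacIdeal n m a b) (C (a j) ^ (n - 2) *
            (C ((∏ i ∈ S, d i) / (∏ i ∈ T \ S, d i)) * (M * ∏ i ∈ T, L n a b i))) := by
        rw [key]
    _ = Ideal.Quotient.mk (jacIdeal n m a b) (C ((a j)⁻¹) ^ (n - 2) *
          (C (a j) ^ (n - 2) *
            (C ((∏ i ∈ S, d i) / (∏ i ∈ T \ S, d i)) * (M * ∏ i ∈ T, L n a b i)))) :=
        (map_mul _ _ _).symm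
    _ = Ideal.Quotient.mk (jacIdeal n m a b)
          (C ((∏ i ∈ S, d i) / (∏ i ∈ T \ S, d i)) * Agen n m a b j kk l) := by
        rw [hcancel, hAgen]

end FermatPencil
end

section
/- Let k be a field of characteristic 0, F ∈ k[X_0,…,X_n] homogeneous of degree m ≥ 2 defining a smooth hypersurface, with F_i = ∂F/∂X_i and F_{ij} = ∂F_i/∂X_j. In the ring J̃ = k[Y_0,X_0,…,X_n]/(Y_0F, Y_0X_0F_0,…, Y_0X_nF_n), for any 0 ≤ k ≤ n and any subset {j_0,…,j_r} ⊂ {0,…,n} of cardinality r+1, one has Y_0^{n+1}·det(Hess(F))_{j_0,…,j_r}·∏_{i ∉ {j_0,…,j_r}} X_i·∏_{i ∈ {j_0,…,j_r}} F_i = Y_0^{n+1}·(det(Hess(F))/(m−1)^{r+1})·∏_{i=0}^n X_i, where det(Hess(F))_{j_0,…,j_r} is the minor of the Hessian matrix (F_{ij}) with rows and columns j_0,…,j_r removed. -/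
/-!
Write `c = m - 1` and, for a set `U` of indices, `E(U) = Y_0 · det(Hess(F)_U) · ∏_{i∉U} X_i ·
∏_{i∈U} F_i`, where `Hess(F)_U` has the rows and columns in `U` removed. Since the `F_i` are
homogeneous of degree `m - 1`, Euler's identity reads `Σ_l X_l F_{il} = c F_i`. For `j ∉ U`,
multiplying `det(Hess(F)_U)` by `X_j` replaces its column `j` by `Σ_{l∉U} X_l F_{il}
= c F_i - Σ_{l∈U} X_l F_{il}`. In `J̃` the terms with `l ∈ U` are killed by `Y_0 F_l`, and the
entries `c F_i` with `i ≠ j` by `Y_0 X_i`, so expanding along column `j` gives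
`E(U) = c · E(U ∪ {j})`. By induction `c^{r+1} E(S) = E(∅) = Y_0 det Hess(F) ∏ X_i`; a single
factor of `Y_0` suffices, and `c` is invertible in characteristic `0`.
-/

open MvPolynomial

namespace HessianRing

variable {k : Type*} [Field k]

/-- The variable `Y_0`. -/
noncomputable def Y0 (n : ℕ) (k : Type*) [Field k] :
    MvPolynomial (Unit ⊕ Fin (n + 1)) k := X (Sum.inl ())

/-- The variable `X_j`. -/
noncomputable def Xb (n : ℕ) (k : Type*) [Field k] (j : Fin (n + 1)) :
    MvPolynomial (Unit ⊕ Fin (n + 1)) k := X (Sum.inr j)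

/-- The inclusion `k[X_0,…,X_n] → k[Y_0,X_0,…,X_n]`. -/
noncomputable def ρ (n : ℕ) (k : Type*) [Field k] :
    MvPolynomial (Fin (n + 1)) k →ₐ[k] MvPolynomial (Unit ⊕ Fin (n + 1)) k :=
  rename Sum.inr

/-- The ideal `(Y_0F, Y_0X_0F_0, …, Y_0X_nF_n)` defining
`J̃ = k[Y_0,X_0,…,X_n]/(Y_0F, Y_0X_0F_0,…,Y_0X_nF_n)`. -/
noncomputable def JtildeIdeal (n : ℕ) {k : Type*} [Field k]
    (F : MvPolynomial (Fin (n + 1)) k) : Ideal (MvPolynomial (Unit ⊕ Fin (n + 1)) k) :=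
  Ideal.span ({Y0 n k * ρ n k F} ∪
    Set.range (fun i : Fin (n + 1) => Y0 n k * Xb n k i * ρ n k (pderiv i F)))

/-- The Hessian matrix `(∂²F/∂X_i∂X_j)` of `F`. -/
noncomputable def hess (n : ℕ) {k : Type*} [Field k] (F : MvPolynomial (Fin (n + 1)) k) :
    Matrix (Fin (n + 1)) (Fin (n + 1)) (MvPolynomial (Fin (n + 1)) k) :=
  Matrix.of fun i j => pderiv j (pderiv i F)

end HessianRing

namespace Matrix

open Finset

variable {n R : Type*} [DecidableEq n] [CommRing R]

/-- Encodes the principal minor on `Uᶜ` as a full determinant (`det_unitRows`), so that removing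
one more index is an `updateRow` (`unitRows_insert`). -/
def unitRows (M : Matrix n n R) (U : Finset n) : Matrix n n R :=
  of fun i => if i ∈ U then Pi.single i 1 else M i

theorem unitRows_apply (M : Matrix n n R) (U : Finset n) (i l : n) :
    M.unitRows U i l = if i ∈ U then (1 : Matrix n n R) i l else M i l := by
  by_cases hi : i ∈ U <;> simp [unitRows, hi, one_apply, Pi.single_apply, eq_comm]

theorem unitRows_empty (M : Matrix n n R) : M.unitRows ∅ = M := by
  ext
  simp [unitRows]

theorem unitRows_insert (M : Matrix n n R) (U : Finset n) (j : n) :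
    M.unitRows (insert j U) = (M.unitRows U).updateRow j (Pi.single j 1) := by
  ext i l
  by_cases hij : i = j
  · subst hij
    simp [unitRows]
  · simp [unitRows, hij]

variable [Fintype n]

theorem unitRows_mulVec (M : Matrix n n R) (U : Finset n) (x : n → R) (i : n) :
    (M.unitRows U *ᵥ x) i = if i ∈ U then x i else (M *ᵥ x) i := by
  by_cases hi : i ∈ U <;> simp [unitRows, hi, mulVec, dotProduct, Pi.single_apply]

theorem det_unitRows (M : Matrix n n R) (U : Finset n) :
    (M.unitRows U).det = (M.submatrix ((↑) : ↥Uᶜ → n) (↑)).det := by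
  rw [twoBlockTriangular_det _ (· ∈ Uᶜ)]
  · have hone : toSquareBlockProp (M.unitRows U) (· ∉ Uᶜ) = 1 := by
      ext ⟨i, hi⟩ ⟨l, hl⟩
      rw [mem_compl, not_not] at hi
      simp [toSquareBlockProp, toBlock, unitRows_apply, hi, one_apply]
    have hminor : toSquareBlockProp (M.unitRows U) (· ∈ Uᶜ) = M.submatrix (↑) (↑) := by
      ext ⟨i, hi⟩ ⟨l, hl⟩
      rw [mem_compl] at hi
      simp [toSquareBlockProp, toBlock, unitRows_apply, hi]
    rw [hone, hminor, det_one, mul_one]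
    -- the two sides use different `Fintype` instances on `↥Uᶜ`
    convert rfl
  · intro i hi l hl
    rw [mem_compl, not_not] at hi
    rw [unitRows_apply, if_pos hi, one_apply_ne]
    rintro rfl
    exact mem_compl.mp hl hi

theorem mul_det_updateCol_of_mul_eq_zero (A : Matrix n n R) (j : n) {v : n → R} {t : R}
    (h : ∀ i ≠ j, t * v i = 0) :
    t * (A.updateCol j v).det = t * v j * (A.updateRow j (Pi.single j 1)).det := by
  rw [← cramer_apply, cramer_eq_adjugate_mulVec, mulVec, dotProduct, mul_sum,
    sum_eq_single j (fun i _ hij => by rw [mul_left_comm, h i hij, mul_zero]) (by simp),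
    adjugate_apply]
  ring

theorem det_updateCol_mulVec (A : Matrix n n R) (j : n) (u : n → R) :
    (A.updateCol j (A *ᵥ u)).det = u j * A.det := by
  rw [← smul_eq_mul, ← det_updateCol_sum]
  congr
  ext k
  simp [mulVec, dotProduct, mul_comm]

section EulerRelation

variable {M : Matrix n n R} {x f : n → R} {c y : R}

theorem det_unitRows_mul_prod_eq_mul_insert (hE : M *ᵥ x = c • f)
    (hy : ∀ i, y * x i * f i = 0) {U : Finset n} {j : n} (hj : j ∉ U) :
    y * (M.unitRows U).det * (∏ i ∈ Uᶜ, x i) * ∏ i ∈ U, f i =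
      c * (y * (M.unitRows (insert j U)).det * (∏ i ∈ (insert j U)ᶜ, x i) *
        ∏ i ∈ insert j U, f i) := by
  set A := M.unitRows U
  set t := y * (∏ i ∈ (insert j U)ᶜ, x i) * ∏ i ∈ U, f i
  have hxA : ∀ i, (A *ᵥ x) i = if i ∈ U then x i else c * f i := by
    intro i
    rw [unitRows_mulVec, hE]
    rfl
  have hvanish : ∀ i ≠ j, t * (A *ᵥ x) i = 0 := by
    intro i hij
    suffices y * x i * f i ∣ t * (A *ᵥ x) i by rwa [hy, zero_dvd_iff] at this
    rw [hxA]
    split_ifs with hi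
    · obtain ⟨q, hq⟩ := dvd_prod_of_mem f hi
      exact ⟨(∏ l ∈ (insert j U)ᶜ, x l) * q, by simp only [t, hq]; ring⟩
    · have hi' : i ∈ (insert j U)ᶜ := by simp [hi, hij]
      obtain ⟨q, hq⟩ := dvd_prod_of_mem x hi'
      exact ⟨c * q * ∏ l ∈ U, f l, by simp only [t, hq]; ring⟩
  have hj' : j ∈ Uᶜ := mem_compl.mpr hj
  calc y * A.det * (∏ i ∈ Uᶜ, x i) * ∏ i ∈ U, f i
      = t * (x j * A.det) := by
        rw [← mul_prod_erase _ _ hj', ← compl_insert]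
        ring
    _ = t * (A *ᵥ x) j * (A.updateRow j (Pi.single j 1)).det := by
        rw [← det_updateCol_mulVec, mul_det_updateCol_of_mul_eq_zero _ _ hvanish]
    _ = _ := by
        rw [hxA, if_neg hj, unitRows_insert, prod_insert hj]
        ring

theorem pow_card_mul_det_unitRows_mul_prod (hE : M *ᵥ x = c • f)
    (hy : ∀ i, y * x i * f i = 0) (U : Finset n) :
    c ^ #U * (y * (M.unitRows U).det * (∏ i ∈ Uᶜ, x i) * ∏ i ∈ U, f i) =
      y * M.det * ∏ i, x i := by
  induction U using Finset.induction_on with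
  | empty => simp [unitRows_empty]
  | insert j U hj ih =>
    rw [card_insert_of_notMem hj, pow_succ, mul_assoc,
      ← det_unitRows_mul_prod_eq_mul_insert hE hy hj, ih]

theorem det_unitRows_mul_prod_eq_pow_card_mul (hE : M *ᵥ x = c • f)
    (hy : ∀ i, y * x i * f i = 0) {c' : R} (hc : c' * c = 1) (U : Finset n) :
    y * (M.unitRows U).det * (∏ i ∈ Uᶜ, x i) * ∏ i ∈ U, f i =
      c' ^ #U * (y * M.det * ∏ i, x i) := by
  rw [← pow_card_mul_det_unitRows_mul_prod hE hy U, ← mul_assoc, ← mul_pow, hc, one_pow,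
    one_mul]

end EulerRelation

end Matrix

namespace HessianRing

open scoped Matrix

variable {k : Type*} [Field k]

theorem hess_mulVec_X {n m : ℕ} {F : MvPolynomial (Fin (n + 1)) k} (hF : F.IsHomogeneous m)
    (hm : 1 ≤ m) : hess n F *ᵥ X = ((m : k) - 1) • fun i => pderiv i F := by
  funext i
  have h := (hF.pderiv (i := i)).sum_X_mul_pderiv
  rw [← Nat.cast_smul_eq_nsmul k, Nat.cast_sub hm, Nat.cast_one] at h
  simpa [hess, Matrix.mulVec, dotProduct, mul_comm] using h

theorem hess_map_mulVec {A : Type*} [CommRing A] [Algebra k A] {n m : ℕ}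
    {F : MvPolynomial (Fin (n + 1)) k} (hF : F.IsHomogeneous m) (hm : 1 ≤ m)
    (φ : MvPolynomial (Fin (n + 1)) k →ₐ[k] A) :
    (hess n F).map φ *ᵥ (φ ∘ X) = algebraMap k A ((m : k) - 1) • (φ ∘ fun i => pderiv i F) := by
  funext i
  have h := RingHom.map_mulVec φ.toRingHom (hess n F) X i
  rw [hess_mulVec_X hF hm] at h
  simpa [Algebra.smul_def] using h.symm

theorem ρ_X (n : ℕ) (i : Fin (n + 1)) : ρ n k (X i) = Xb n k i :=
  rename_X _ _

theorem Y0_mul_Xb_mul_pderiv_mem (n : ℕ) (F : MvPolynomial (Fin (n + 1)) k) (i : Fin (n + 1)) :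
    Y0 n k * Xb n k i * ρ n k (pderiv i F) ∈ JtildeIdeal n F :=
  Ideal.subset_span (Set.mem_union_right _ ⟨i, rfl⟩)

theorem hessian_minor_identity_general (n m r : ℕ) [CharZero k] (hm : 2 ≤ m)
    (F : MvPolynomial (Fin (n + 1)) k) (hhom : F.IsHomogeneous m)
    (S : Finset (Fin (n + 1))) (hScard : S.card = r + 1)
    (hc : (Sᶜ : Finset (Fin (n + 1))).card = n - r) :
    Ideal.Quotient.mk (JtildeIdeal n F)
        (Y0 n k ^ (n + 1) *
          ρ n k (((hess n F).submatrix
              (fun p : Fin (n - r) => ((Sᶜ : Finset (Fin (n + 1))).orderEmbOfFin hc) p)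
              (fun p : Fin (n - r) => ((Sᶜ : Finset (Fin (n + 1))).orderEmbOfFin hc) p)).det) *
          (∏ i ∈ (Sᶜ : Finset (Fin (n + 1))), Xb n k i) *
          ∏ i ∈ S, ρ n k (pderiv i F)) =
      Ideal.Quotient.mk (JtildeIdeal n F)
        (C ((((m : k) - 1)⁻¹) ^ (r + 1)) * Y0 n k ^ (n + 1) *
          ρ n k (hess n F).det * ∏ i, Xb n k i) := by
  set φ := (Ideal.Quotient.mkₐ k (JtildeIdeal n F)).comp (ρ n k)
  set c := algebraMap k (MvPolynomial (Unit ⊕ Fin (n + 1)) k ⧸ JtildeIdeal n F) ((m : k) - 1)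
  have hy : ∀ i, Ideal.Quotient.mk (JtildeIdeal n F) (Y0 n k) * (φ ∘ X) i *
      (φ ∘ fun i => pderiv i F) i = 0 := fun i => by
    simpa [φ, ρ_X, ← map_mul] using
      Ideal.Quotient.eq_zero_iff_mem.mpr (Y0_mul_Xb_mul_pderiv_mem n F i)
  have hc_inv : algebraMap k _ ((m : k) - 1)⁻¹ * c = 1 := by
    have : (m : k) - 1 ≠ 0 := sub_ne_zero.mpr (by exact_mod_cast (by omega : m ≠ 1))
    rw [← map_mul, inv_mul_cancel₀ this, map_one]
  have hminor : (((hess n F).map φ).unitRows S).det = φ ((hess n F).submatrix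
      (fun p : Fin (n - r) => ((Sᶜ : Finset (Fin (n + 1))).orderEmbOfFin hc) p)
      (fun p : Fin (n - r) => ((Sᶜ : Finset (Fin (n + 1))).orderEmbOfFin hc) p)).det := by
    rw [Matrix.det_unitRows, AlgHom.map_det]
    exact (Matrix.det_submatrix_equiv_self (Sᶜ.orderIsoOfFin hc).toEquiv _).symm
  have key := Matrix.det_unitRows_mul_prod_eq_pow_card_mul
    (hess_map_mulVec hhom (by omega) φ) hy hc_inv S
  rw [hminor, hScard, ← AlgHom.mapMatrix_apply, ← φ.map_det] at key
  simp only [φ, Function.comp_apply, AlgHom.comp_apply, Ideal.Quotient.mkₐ_eq_mk, ρ_X] at key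
  simp only [map_mul, map_pow, map_prod, ← algebraMap_eq, Ideal.Quotient.mk_algebraMap]
  linear_combination Ideal.Quotient.mk (JtildeIdeal n F) (Y0 n k) ^ n * key

/-- In `J̃ = k[Y_0,X_0,…,X_n]/(Y_0F, Y_0X_0F_0,…,Y_0X_nF_n)` (char 0, `F` homogeneous of
degree `m ≥ 2` defining a smooth hypersurface), for any subset `S = {j_0,…,j_r}` of
cardinality `r+1` one has
`Y_0^{n+1}·det(Hess(F))_S·∏_{i∉S}X_i·∏_{i∈S}F_i = Y_0^{n+1}·(det Hess(F)/(m−1)^{r+1})·∏_i X_i`,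
where `det(Hess(F))_S` is the minor of the Hessian with rows and columns in `S` removed. -/
theorem hessian_minor_identity (n m r : ℕ) [CharZero k] (hm : 2 ≤ m)
    (F : MvPolynomial (Fin (n + 1)) k) (hhom : F.IsHomogeneous m)
    (hsmooth : ∀ x : Fin (n + 1) → k, x ≠ 0 → ¬ ∀ i, eval x (pderiv i F) = 0)
    (S : Finset (Fin (n + 1))) (hScard : S.card = r + 1)
    (hc : (Sᶜ : Finset (Fin (n + 1))).card = n - r) :
    Ideal.Quotient.mk (JtildeIdeal n F)
        (Y0 n k ^ (n + 1) *
          ρ n k (((hess n F).submatrix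
              (fun p : Fin (n - r) => ((Sᶜ : Finset (Fin (n + 1))).orderEmbOfFin hc) p)
              (fun p : Fin (n - r) => ((Sᶜ : Finset (Fin (n + 1))).orderEmbOfFin hc) p)).det) *
          (∏ i ∈ (Sᶜ : Finset (Fin (n + 1))), Xb n k i) *
          ∏ i ∈ S, ρ n k (pderiv i F)) =
      Ideal.Quotient.mk (JtildeIdeal n F)
        (C ((((m : k) - 1)⁻¹) ^ (r + 1)) * Y0 n k ^ (n + 1) *
          ρ n k (hess n F).det * ∏ i, Xb n k i) :=
  hessian_minor_identity_general n m r hm F hhom S hScard hc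

end HessianRing
end

section
/- Let F = Σ_{i=0}^n L_iX_i^m with L_i = a_iY_0 + b_iY_1, a_i,b_i ∈ k*, and consider the (n+3)×(n+3) matrix M with rows: row 0 = (F_0, 0, ma_0Y_0X_0^{m-1}, …, ma_nY_0X_n^{m-1}), row 1 = (0, F_1, mb_0Y_1X_0^{m-1}, …, mb_nY_1X_n^{m-1}), and row i+2 = (ma_iX_i^m, mb_iX_i^m, 0, …, m²L_iX_i^{m-1}, …, 0) with m²L_iX_i^{m-1} in column i+2, for 0 ≤ i ≤ n, where F_0 = Σa_iX_i^m, F_1 = Σb_iX_i^m. Then det(M_{0|1}) = −m^{2(n+1)}·Y_1·(∏_{i=0}^n L_iX_i^{m-1})·Σ_{i=0}^n (a_ib_iX_i^m)/L_i, as an identity of rational functions (equivalently, after clearing the denominators L_i, an identity of polynomials). -/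
/-!
Deleting row 0 and column 1 of `M` leaves an arrowhead matrix: a zero corner, the border row
`(m b_j Y_1 X_j^{m-1})_j`, the border column `(m a_i X_i^m)_i` and the diagonal block
`diag(m² L_i X_i^{m-1})`. Over any commutative ring an arrowhead matrix with border row
`c`, border column `d` and block `E` has determinant `-c · adj(E) · d`, which for
`E = diag e` is `-Σ_j c_j d_j ∏_{i ≠ j} e_i`; factoring out `m^{2(n+1)} Y_1 ∏ X_i^{m-1}`
gives the claim.
-/

namespace Matrix

variable {R : Type*} [CommRing R] {n : Type*} [Fintype n] [DecidableEq n]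

theorem det_fromBlocks_zero₁₁_mul_det (c d : n → R) (E : Matrix n n R) :
    (fromBlocks 0 (replicateRow Unit c) (replicateCol Unit d) E).det * E.det =
      -(c ⬝ᵥ E.adjugate *ᵥ d) * E.det := by
  -- `E * adj E = det E • 1` makes the bottom-left block of the product vanish.
  have hprod : fromBlocks 0 (replicateRow Unit c) (replicateCol Unit d) E *
      fromBlocks (E.det • 1) 0 (-replicateCol Unit (E.adjugate *ᵥ d)) 1 =
      fromBlocks (-(replicateRow Unit c * replicateCol Unit (E.adjugate *ᵥ d)))
        (replicateRow Unit c) 0 E := by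
    rw [fromBlocks_multiply]
    congr 1
    · simp
    · simp
    · rw [Matrix.mul_neg, ← replicateCol_mulVec, mulVec_mulVec, mul_adjugate, smul_mulVec,
        one_mulVec, Matrix.mul_smul, Matrix.mul_one, replicateCol_smul, add_neg_cancel]
    · simp
  have hdet := congrArg det hprod
  rwa [det_mul, det_fromBlocks_zero₁₂, det_fromBlocks_zero₂₁, det_one, mul_one,
    det_unique (-_), det_smul, det_one, Fintype.card_unit, pow_one, mul_one, neg_apply,
    replicateRow_mul_replicateCol_apply] at hdet

open Polynomial in
theorem det_fromBlocks_zero₁₁ (c d : n → R) (E : Matrix n n R) :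
    (fromBlocks 0 (replicateRow Unit c) (replicateCol Unit d) E).det =
      -(c ⬝ᵥ E.adjugate *ᵥ d) := by
  -- Prove it for `charmatrix (-E) = X + E` over `R[X]`, whose determinant is monic and hence
  -- cancellable, then evaluate at `X = 0`.
  have hcancel := (charpoly_monic (-E)).isRegular.right <|
    det_fromBlocks_zero₁₁_mul_det (C ∘ c) (C ∘ d) (charmatrix (-E))
  have hE : (charmatrix (-E)).map (evalRingHom 0) = E := by
    ext i j
    by_cases hij : i = j
    · subst hij; simp
    · simp [charmatrix_apply_ne _ _ _ hij]
  have hadj : (charmatrix (-E)).adjugate.map (evalRingHom 0) = E.adjugate := by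
    rw [← RingHom.mapMatrix_apply, RingHom.map_adjugate, RingHom.mapMatrix_apply, hE]
  have hC (v : n → R) : evalRingHom 0 ∘ C ∘ v = v := by
    ext; simp
  have hv : evalRingHom 0 ∘ ((charmatrix (-E)).adjugate *ᵥ C ∘ d) = E.adjugate *ᵥ d := by
    ext i
    rw [Function.comp_apply, RingHom.map_mulVec, hadj, hC]
  have hrow : (replicateRow Unit (C ∘ c)).map (evalRingHom 0) = replicateRow Unit c :=
    congrArg (replicateRow Unit) (hC c)
  have hcol : (replicateCol Unit (C ∘ d)).map (evalRingHom 0) = replicateCol Unit d :=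
    congrArg (replicateCol Unit) (hC d)
  have heval := congrArg (evalRingHom 0) hcancel
  rwa [RingHom.map_det, RingHom.mapMatrix_apply, fromBlocks_map, Matrix.map_zero _ (map_zero _),
    hrow, hcol, hE, map_neg, RingHom.map_dotProduct, hC, hv] at heval

theorem det_fromBlocks_zero₁₁_diagonal (c d e : n → R) :
    (fromBlocks 0 (replicateRow Unit c) (replicateCol Unit d) (diagonal e)).det =
      -∑ j, c j * d j * ∏ i ∈ {j}ᶜ, e i := by
  simp only [det_fromBlocks_zero₁₁, adjugate_diagonal, mulVec_diagonal, dotProduct,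
    Finset.compl_singleton, mul_assoc, mul_comm (∏ _ ∈ _, _) (d _)]

end Matrix

open MvPolynomial

theorem fermat_pencil_minor_det_general
    {k : Type*} [Field k] (n m : ℕ)
    (a b : Fin (n + 1) → k)
    (L : Fin (n + 1) → MvPolynomial (Fin 2 ⊕ Fin (n + 1)) k)
    (B : Matrix (Unit ⊕ Fin (n + 1)) (Unit ⊕ Fin (n + 1))
      (MvPolynomial (Fin 2 ⊕ Fin (n + 1)) k))
    (hB00 : ∀ u v : Unit, B (Sum.inl u) (Sum.inl v) = 0)
    (hB0j : ∀ (u : Unit) (j : Fin (n + 1)), B (Sum.inl u) (Sum.inr j) =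
      C ((m : k) * b j) * X (Sum.inl 1) * X (Sum.inr j) ^ (m - 1))
    (hBi0 : ∀ (i : Fin (n + 1)) (u : Unit), B (Sum.inr i) (Sum.inl u) =
      C ((m : k) * a i) * X (Sum.inr i) ^ m)
    (hBij : ∀ i j : Fin (n + 1), B (Sum.inr i) (Sum.inr j) =
      if i = j then C ((m : k) ^ 2) * L i * X (Sum.inr i) ^ (m - 1) else 0) :
    B.det = - (C ((m : k) ^ (2 * (n + 1))) * X (Sum.inl 1) *
      (∏ i, X (Sum.inr i) ^ (m - 1)) *
      ∑ i, C (a i * b i) * X (Sum.inr i) ^ m * ∏ j ∈ ({i}ᶜ : Finset (Fin (n + 1))), L j) := by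
  have hB : B = Matrix.fromBlocks 0
      (Matrix.replicateRow Unit fun j =>
        C ((m : k) * b j) * X (Sum.inl 1) * X (Sum.inr j) ^ (m - 1))
      (Matrix.replicateCol Unit fun i => C ((m : k) * a i) * X (Sum.inr i) ^ m)
      (Matrix.diagonal fun i => C ((m : k) ^ 2) * L i * X (Sum.inr i) ^ (m - 1)) := by
    ext (i | i) (j | j) <;> simp [hB00, hB0j, hBi0, hBij, Matrix.diagonal_apply]
  rw [hB, Matrix.det_fromBlocks_zero₁₁_diagonal, Finset.mul_sum, neg_inj]
  refine Finset.sum_congr rfl fun j _ => ?_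
  rw [Fintype.prod_eq_mul_prod_compl j, Finset.prod_mul_distrib, Finset.prod_mul_distrib,
    Finset.prod_const, Finset.card_compl, Finset.card_singleton, Fintype.card_fin,
    Nat.add_sub_cancel]
  simp only [map_mul, map_pow]
  ring

/-- The minor `det(M_{0|1})` of the Jacobian-type matrix for the pencil
`F = Σ L_iX_i^m` of generalized Fermat hypersurfaces equals
`−m^{2(n+1)}·Y_1·(∏ L_iX_i^{m-1})·Σ_i a_ib_iX_i^m/L_i`; after clearing the denominators
`L_i` this is the polynomial identity stated below.  Here the minor (row `0` and column `1`
of `M` removed) is the explicit matrix `B` indexed by `Unit ⊕ Fin (n+1)`. -/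
theorem fermat_pencil_minor_det
    {k : Type*} [Field k] (n m : ℕ) (hm : 2 ≤ m) (hmk : (m : k) ≠ 0)
    (a b : Fin (n + 1) → k) (ha : ∀ i, a i ≠ 0) (hb : ∀ i, b i ≠ 0)
    (L : Fin (n + 1) → MvPolynomial (Fin 2 ⊕ Fin (n + 1)) k)
    (hL : ∀ i, L i = C (a i) * X (Sum.inl 0) + C (b i) * X (Sum.inl 1))
    (B : Matrix (Unit ⊕ Fin (n + 1)) (Unit ⊕ Fin (n + 1))
      (MvPolynomial (Fin 2 ⊕ Fin (n + 1)) k))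
    (hB00 : ∀ u v : Unit, B (Sum.inl u) (Sum.inl v) = 0)
    (hB0j : ∀ (u : Unit) (j : Fin (n + 1)), B (Sum.inl u) (Sum.inr j) =
      C ((m : k) * b j) * X (Sum.inl 1) * X (Sum.inr j) ^ (m - 1))
    (hBi0 : ∀ (i : Fin (n + 1)) (u : Unit), B (Sum.inr i) (Sum.inl u) =
      C ((m : k) * a i) * X (Sum.inr i) ^ m)
    (hBij : ∀ i j : Fin (n + 1), B (Sum.inr i) (Sum.inr j) =
      if i = j then C ((m : k) ^ 2) * L i * X (Sum.inr i) ^ (m - 1) else 0) :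
    B.det = - (C ((m : k) ^ (2 * (n + 1))) * X (Sum.inl 1) *
      (∏ i, X (Sum.inr i) ^ (m - 1)) *
      ∑ i, C (a i * b i) * X (Sum.inr i) ^ m * ∏ j ∈ ({i}ᶜ : Finset (Fin (n + 1))), L j) :=
  fermat_pencil_minor_det_general n m a b L B hB00 hB0j hBi0 hBij
end

section
/- Let a_i, b_i ∈ k* (0 ≤ i ≤ n) with a_ib_j − a_jb_i ≠ 0 for i ≠ j, m ≥ 2 coprime to char(k), F_0 = Σa_iX_i^m, F_1 = Σb_iX_i^m, F = Y_0F_0 + Y_1F_1 = Σ L_iX_i^m. Then there is no point ([y_0:y_1],[x_0:⋯:x_n]) ∈ P^1 × P^n (over an algebraic closure) satisfying Y_jF_j = 0 for j = 0,1 and X_i·(∂F/∂X_i) = 0 for all i; i.e., the sets {Y_0F_0 ≠ 0}, {Y_1F_1 ≠ 0}, {X_0·∂F/∂X_0 ≠ 0}, …, {X_n·∂F/∂X_n ≠ 0} cover P^1 × P^n. -/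
/-- The sets `{Y_0F_0 ≠ 0}, {Y_1F_1 ≠ 0}, {X_i·∂F/∂X_i ≠ 0}` cover `P^1 × P^n` for a pencil
of generalized Fermat hypersurfaces: there is no pair of nonzero vectors `(y_0,y_1)` and
`(x_0,…,x_n)` over an algebraically closed field at which all of `y_0F_0(x)`, `y_1F_1(x)` and
`x_i·L_i(y)·x_i^{m-1}` vanish. -/
theorem fermat_pencil_cover
    {k : Type*} [Field k] [IsAlgClosed k] (n m : ℕ) (hm : 2 ≤ m) (hmk : (m : k) ≠ 0)
    (a b : Fin (n + 1) → k)
    (ha : ∀ i, a i ≠ 0) (hb : ∀ i, b i ≠ 0)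
    (hcross : ∀ i j, i ≠ j → a i * b j - a j * b i ≠ 0) :
    ¬ ∃ (y : Fin 2 → k) (x : Fin (n + 1) → k), y ≠ 0 ∧ x ≠ 0 ∧
        y 0 * (∑ i, a i * x i ^ m) = 0 ∧
        y 1 * (∑ i, b i * x i ^ m) = 0 ∧
        ∀ i, x i * ((a i * y 0 + b i * y 1) * x i ^ (m - 1)) = 0 := by
  rintro ⟨y, x, hy, hx, h0, h1, hstar⟩
  -- rewrite the star condition as L_i * x_i^m = 0
  have hLx : ∀ i, (a i * y 0 + b i * y 1) * x i ^ m = 0 := by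
    intro i
    have hpow : x i ^ m = x i * x i ^ (m - 1) := by
      conv_lhs => rw [show m = (m - 1) + 1 from (Nat.succ_pred_eq_of_pos (by omega)).symm]
      rw [pow_succ]
      ring
    have := hstar i
    rw [hpow]; ring_nf; ring_nf at this; linear_combination this
  -- pick a nonzero coordinate
  obtain ⟨i₀, hi₀⟩ : ∃ i, x i ≠ 0 := by
    by_contra h
    push_neg at h
    exact hx (funext h)
  have hL₀ : a i₀ * y 0 + b i₀ * y 1 = 0 := by
    have := hLx i₀
    have hxm : x i₀ ^ m ≠ 0 := pow_ne_zero _ hi₀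
    exact (mul_eq_zero.mp this).resolve_right hxm
  -- all other coordinates vanish
  have hxj : ∀ j, j ≠ i₀ → x j = 0 := by
    intro j hj
    by_contra hxj0
    have hLj : a j * y 0 + b j * y 1 = 0 := by
      have := hLx j
      exact (mul_eq_zero.mp this).resolve_right (pow_ne_zero _ hxj0)
    have hd := hcross i₀ j (fun h => hj h.symm)
    have hy0 : y 0 = 0 := by
      have : (a i₀ * b j - a j * b i₀) * y 0 = 0 := by
        linear_combination b j * hL₀ - b i₀ * hLj
      exact (mul_eq_zero.mp this).resolve_left hd
    have hy1 : y 1 = 0 := by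
      have : (a i₀ * b j - a j * b i₀) * y 1 = 0 := by
        linear_combination a i₀ * hLj - a j * hL₀
      exact (mul_eq_zero.mp this).resolve_left hd
    exact hy (funext fun i => by fin_cases i <;> assumption)
  -- the sums reduce to a single term
  have hsum : ∀ c : Fin (n + 1) → k, (∑ i, c i * x i ^ m) = c i₀ * x i₀ ^ m := by
    intro c
    rw [Finset.sum_eq_single i₀]
    · intro j _ hj
      rw [hxj j hj, zero_pow (by omega), mul_zero]
    · intro h; exact absurd (Finset.mem_univ i₀) h
  have hy0 : y 0 = 0 := by
    rw [hsum a] at h0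
    rcases mul_eq_zero.mp h0 with h | h
    · exact h
    · exact absurd h (mul_ne_zero (ha i₀) (pow_ne_zero _ hi₀))
  have hy1 : y 1 = 0 := by
    rw [hsum b] at h1
    rcases mul_eq_zero.mp h1 with h | h
    · exact h
    · exact absurd h (mul_ne_zero (hb i₀) (pow_ne_zero _ hi₀))
  exact hy (funext fun i => by fin_cases i <;> assumption)
end
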